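/- arXiv:math/0404103 — 6 statements merged into one kernel-verified Lean document; each statement's English description precedes it below -/
import Mathlib

section
/- Let m ≥ 2 and let X_1, X_2, … be i.i.d. random variables uniform on [m] := {1,…,m}. Let τ be the minimal integer such that (X_{τ-1}, X_τ) = (X_{μ-1}, X_μ) for some μ < τ, and for each n let Y_n := #{j < n : X_j = X_n}. Then m^{-1/2} · max{Y_n : n ≤ τ} → 0 in probability as m → ∞. -/
/-!
Fix `g ≈ m^(1/16)` and `t = 4mg`. If `τ > t`, the `2mg` disjoint pairs `(X (2a+1), X (2a+2))` are
pairwise distinct; a birthday count bounds this by `(m²)_(2mg) / m^(4mg) ≤ 1/g`. Otherwise a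
maximum above `k ≈ ε√m` forces `Y n ≥ k` for some `n ≤ t`, and a union bound over the `k`-subsets
of earlier indices gives at most `t · C(t, k) / m^k ≤ 1/m`, because `k!` outgrows `(4g)^k m²`.
-/

open MeasureTheory ProbabilityTheory Filter
open scoped ENNReal Nat Topology

theorem pow_mul_add_le_add_pow (a b : ℕ) :
    ∀ n, a ^ n * (a + (n + 1) * b) ≤ (a + b) ^ (n + 1)
  | 0 => by simp
  | n + 1 => by
    have ih := pow_mul_add_le_add_pow a b n
    calc a ^ (n + 1) * (a + (n + 2) * b)
        = a * (a ^ n * (a + (n + 1) * b)) + b * a ^ (n + 1) := by ring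
      _ ≤ a * (a + b) ^ (n + 1) + b * (a + b) ^ (n + 1) := by
          gcongr
          exact le_add_right le_rfl
      _ = (a + b) ^ (n + 2) := by ring

theorem descFactorial_two_mul_mul_le {s H g : ℕ} (hH : 0 < H) (hHs : H ≤ s)
    (hg : s * g ≤ H * H) : s.descFactorial (2 * H) * g ≤ s ^ (2 * H) := by
  have hsplit : s.descFactorial (2 * H) = (s - H).descFactorial H * s.descFactorial H := by
    rw [← Nat.descFactorial_mul_descFactorial (by omega : H ≤ 2 * H), two_mul, Nat.add_sub_cancel]
  have hbern : (s - H) ^ (H - 1) * ((s - H) + H * H) ≤ s ^ H := by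
    simpa [Nat.sub_add_cancel hH, Nat.sub_add_cancel hHs] using
      pow_mul_add_le_add_pow (s - H) H (H - 1)
  have hlow : (s - H) ^ H * g ≤ s ^ H :=
    calc (s - H) ^ H * g = (s - H) ^ (H - 1) * ((s - H) * g) := by
          rw [← mul_assoc, ← pow_succ, Nat.sub_add_cancel hH]
      _ ≤ (s - H) ^ (H - 1) * ((s - H) + H * H) := by
          gcongr
          calc (s - H) * g ≤ s * g := by gcongr; omega
            _ ≤ (s - H) + H * H := hg.trans le_add_self
      _ ≤ s ^ H := hbern
  calc s.descFactorial (2 * H) * g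
      = (s - H).descFactorial H * g * s.descFactorial H := by rw [hsplit]; ring
    _ ≤ (s - H) ^ H * g * s ^ H := by
        gcongr <;> exact Nat.descFactorial_le_pow _ _
    _ ≤ s ^ H * s ^ H := by gcongr
    _ = s ^ (2 * H) := by rw [← pow_add, two_mul]

theorem pow_le_factorial_two_mul_add_one (h : ℕ) : h ^ h ≤ (2 * h + 1)! :=
  calc h ^ h ≤ (h + 1) ^ h := Nat.pow_le_pow_left h.le_succ h
    _ ≤ h ! * (h + 1) ^ h := Nat.le_mul_of_pos_left _ h.factorial_pos
    _ ≤ (h + h)! := Nat.factorial_mul_pow_le_factorial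
    _ ≤ (2 * h + 1)! := Nat.factorial_le (by omega)

theorem pow_mul_sq_le_factorial {c m h : ℕ} (h7 : 7 ≤ h) (hc : c ^ 2 ≤ h)
    (hm : c ^ 16 * m ^ 2 ≤ h ^ 7) : c ^ (2 * h + 2) * m ^ 2 ≤ (2 * h + 1)! :=
  calc c ^ (2 * h + 2) * m ^ 2 = (c ^ 2) ^ (h - 7) * (c ^ 16 * m ^ 2) := by
        rw [← pow_mul, mul_comm 2 (h - 7), ← mul_assoc, ← pow_add]
        congr 2
        omega
    _ ≤ h ^ (h - 7) * h ^ 7 := by gcongr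
    _ = h ^ h := by rw [← pow_add, Nat.sub_add_cancel h7]
    _ ≤ (2 * h + 1)! := pow_le_factorial_two_mul_add_one h

theorem mul_choose_mul_le_pow {c m k : ℕ} (h : c ^ (k + 1) * m ^ 2 ≤ k !) :
    c * m * (c * m).choose k * m ≤ m ^ k := by
  refine Nat.le_of_mul_le_mul_right ?_ k.factorial_pos
  calc c * m * (c * m).choose k * m * k !
      = c * m * (c * m).descFactorial k * m := by
        rw [Nat.descFactorial_eq_factorial_mul_choose]; ring
    _ ≤ c * m * (c * m) ^ k * m := by gcongr; exact Nat.descFactorial_le_pow _ _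
    _ = c ^ (k + 1) * m ^ 2 * m ^ k := by ring
    _ ≤ m ^ k * k ! := by rw [mul_comm (m ^ k)]; gcongr

theorem natCast_mul_inv_pow_le_inv {a b m j : ℕ} (h : a * b ≤ m ^ j) :
    (a : ℝ≥0∞) * (m : ℝ≥0∞)⁻¹ ^ j ≤ (b : ℝ≥0∞)⁻¹ := by
  rw [ENNReal.le_inv_iff_mul_le, ← ENNReal.inv_pow, mul_right_comm]
  calc (a : ℝ≥0∞) * b * ((m : ℝ≥0∞) ^ j)⁻¹ ≤ (m : ℝ≥0∞) ^ j * ((m : ℝ≥0∞) ^ j)⁻¹ := by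
        gcongr; exact_mod_cast h
    _ ≤ 1 := ENNReal.mul_inv_le_one _

section RandomSequences

variable {Ω : Type*}

/-- `X 1, X 2, …` are i.i.d. uniform on `{1, …, m}`; `X 0` is unconstrained. -/
structure IsIIDUniform [MeasurableSpace Ω] (P : Measure Ω) (X : ℕ → Ω → ℕ) (m : ℕ) : Prop where
  measurable : ∀ n, Measurable (X n)
  map_singleton : ∀ n j, P.map (X (n + 1)) {j} = if j ∈ Finset.Icc 1 m then (m : ℝ≥0∞)⁻¹ else 0
  indep : iIndepFun (fun n => X (n + 1)) P

def repeatCount (X : ℕ → Ω → ℕ) (n : ℕ) (ω : Ω) : ℕ :=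
  ((Finset.Ico 1 n).filter fun j => X j ω = X n ω).card

def block (X : ℕ → Ω → ℕ) (L a : ℕ) (ω : Ω) : Fin L → ℕ :=
  fun r => X (r + L * a + 1) ω

noncomputable def firstPairRepeat (X : ℕ → Ω → ℕ) (ω : Ω) : ℕ :=
  sInf {n | ∃ j, 2 ≤ j ∧ j < n ∧ X (n - 1) ω = X (j - 1) ω ∧ X n ω = X j ω}

theorem injective_block_two_of_lt_firstPairRepeat {X : ℕ → Ω → ℕ} {ω : Ω} {N : ℕ}
    (hN : 2 * N < firstPairRepeat X ω) : Function.Injective fun a : Fin N => block X 2 a ω := by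
  have hne : ∀ a b : Fin N, a < b → block X 2 a ω ≠ block X 2 b ω := by
    intro a b hab heq
    have h₀ : X (0 + 2 * a + 1) ω = X (0 + 2 * b + 1) ω := congrFun heq 0
    have h₁ : X (1 + 2 * a + 1) ω = X (1 + 2 * b + 1) ω := congrFun heq 1
    have : firstPairRepeat X ω ≤ 2 * b + 2 := Nat.sInf_le
      ⟨2 * a + 2, by omega, by omega, by convert h₀.symm using 2 <;> omega,
        by convert h₁.symm using 2 <;> omega⟩
    omega
  intro a b hab
  by_contra hab'
  rcases lt_or_gt_of_ne hab' with h | h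
  · exact hne a b h hab
  · exact hne b a h hab.symm

theorem setOf_lt_sup_subset (f : ℕ → Ω → ℕ) (τ : Ω → ℕ) (k t : ℕ) :
    {ω | k < (Finset.Icc 1 (τ ω)).sup (f · ω)} ⊆
      {ω | t < τ ω} ∪ ⋃ n ∈ Finset.Icc 1 t, {ω | k < f n ω} := by
  intro ω hω
  have hω : k < (Finset.Icc 1 (τ ω)).sup (f · ω) := hω
  obtain ⟨n, hn, hkn⟩ := Finset.lt_sup_iff.1 hω
  by_cases hτ : t < τ ω
  · exact Or.inl hτ
  · refine Or.inr (Set.mem_biUnion (x := n) ?_ hkn)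
    simp only [Finset.coe_Icc, Set.mem_Icc, Finset.mem_Icc] at hn ⊢
    omega

namespace IsIIDUniform

variable [MeasurableSpace Ω] {P : Measure Ω} {X : ℕ → Ω → ℕ} {m : ℕ} (hX : IsIIDUniform P X m)
include hX

theorem measure_preimage_singleton_le {n : ℕ} (hn : 1 ≤ n) (v : ℕ) :
    P (X n ⁻¹' {v}) ≤ (m : ℝ≥0∞)⁻¹ := by
  obtain ⟨n, rfl⟩ := Nat.exists_eq_add_of_le' hn
  rw [← Measure.map_apply (hX.measurable _) (measurableSet_singleton v), hX.map_singleton]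
  split_ifs <;> simp

theorem measure_iInter_preimage_le {κ : Type*} [Fintype κ] {ι : κ → ℕ}
    (hι : Function.Injective ι) (hpos : ∀ i, 1 ≤ ι i) (v : κ → ℕ) :
    P (⋂ i, X (ι i) ⁻¹' {v i}) ≤ (m : ℝ≥0∞)⁻¹ ^ Fintype.card κ := by
  have hsucc : ∀ i, ι i - 1 + 1 = ι i := fun i => Nat.sub_add_cancel (hpos i)
  have hindep := hX.indep.precomp (g := fun i => ι i - 1) fun i j hij =>
    hι (by rw [← hsucc i, ← hsucc j]; exact congrArg (· + 1) hij)
  simp only [hsucc] at hindep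
  rw [hindep.meas_iInter fun i => ⟨{v i}, measurableSet_singleton _, rfl⟩]
  calc ∏ i, P (X (ι i) ⁻¹' {v i}) ≤ ∏ _i : κ, (m : ℝ≥0∞)⁻¹ :=
        Finset.prod_le_prod' fun i _ => hX.measure_preimage_singleton_le (hpos i) (v i)
    _ = (m : ℝ≥0∞)⁻¹ ^ Fintype.card κ := by simp

theorem ae_mem_Icc : ∀ᵐ ω ∂P, ∀ n, 1 ≤ n → X n ω ∈ Finset.Icc 1 m := by
  rw [ae_all_iff]
  rintro (_ | n)
  · exact Eventually.of_forall fun _ h => absurd h (by omega)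
  have hnull : P.map (X (n + 1)) (↑(Finset.Icc 1 m))ᶜ = 0 := by
    rw [← Set.biUnion_of_singleton (↑(Finset.Icc 1 m) : Set ℕ)ᶜ,
      measure_biUnion_null_iff (Set.to_countable _)]
    intro j hj
    rw [hX.map_singleton]
    exact if_neg (by simpa using hj)
  rw [Measure.map_apply (hX.measurable _) (Finset.measurableSet _).compl] at hnull
  filter_upwards [measure_eq_zero_iff_ae_notMem.1 hnull] with ω hω _
  simpa using hω

theorem measure_forall_eq_le (hm : m ≠ 0) {n : ℕ} (hn : 1 ≤ n) {S : Finset ℕ}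
    (hS : ∀ j ∈ S, 1 ≤ j) (hnS : n ∉ S) :
    P {ω | ∀ j ∈ S, X j ω = X n ω} ≤ (m : ℝ≥0∞)⁻¹ ^ S.card := by
  have hsub : {ω | ∀ j ∈ S, X j ω = X n ω} ≤ᵐ[P]
      ⋃ v ∈ Finset.Icc 1 m, ⋂ j : ↥(insert n S), X j ⁻¹' {v} := by
    filter_upwards [hX.ae_mem_Icc] with ω hω hωS
    refine Set.mem_iUnion₂.2 ⟨X n ω, hω n hn, Set.mem_iInter.2 fun ⟨j, hj⟩ => ?_⟩
    simp only [Set.mem_preimage, Set.mem_singleton_iff]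
    rcases Finset.mem_insert.1 hj with rfl | hj
    · rfl
    · exact hωS j hj
  have hpos : ∀ j : ↥(insert n S), 1 ≤ (j : ℕ) := fun ⟨j, hj⟩ => by
    rcases Finset.mem_insert.1 hj with rfl | hj
    exacts [hn, hS j hj]
  calc P {ω | ∀ j ∈ S, X j ω = X n ω}
      ≤ ∑ v ∈ Finset.Icc 1 m, P (⋂ j : ↥(insert n S), X j ⁻¹' {v}) :=
        (measure_mono_ae hsub).trans (measure_biUnion_finset_le _ _)
    _ ≤ ∑ _v ∈ Finset.Icc 1 m, (m : ℝ≥0∞)⁻¹ ^ (S.card + 1) := by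
        gcongr with v
        simpa [Finset.card_insert_of_notMem hnS] using
          hX.measure_iInter_preimage_le Subtype.val_injective hpos fun _ => v
    _ = (m : ℝ≥0∞)⁻¹ ^ S.card := by
        rw [Finset.sum_const, Nat.card_Icc, Nat.add_sub_cancel, nsmul_eq_mul, pow_succ,
          mul_left_comm, ENNReal.mul_inv_cancel (by exact_mod_cast hm) (by simp), mul_one]

theorem measure_le_repeatCount_le (hm : m ≠ 0) {n : ℕ} (hn : 1 ≤ n) (k : ℕ) :
    P {ω | k ≤ repeatCount X n ω} ≤ (n - 1).choose k * (m : ℝ≥0∞)⁻¹ ^ k := by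
  have hsub : {ω | k ≤ repeatCount X n ω} ⊆
      ⋃ S ∈ (Finset.Ico 1 n).powersetCard k, {ω | ∀ j ∈ S, X j ω = X n ω} := by
    intro ω hω
    obtain ⟨S, hSsub, hScard⟩ := Finset.exists_subset_card_eq hω
    exact Set.mem_biUnion (Finset.mem_powersetCard.2 ⟨hSsub.trans (Finset.filter_subset _ _),
      hScard⟩) fun j hj => (Finset.mem_filter.1 (hSsub hj)).2
  calc P {ω | k ≤ repeatCount X n ω}
      ≤ ∑ S ∈ (Finset.Ico 1 n).powersetCard k, P {ω | ∀ j ∈ S, X j ω = X n ω} :=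
        (measure_mono hsub).trans (measure_biUnion_finset_le _ _)
    _ ≤ ∑ _S ∈ (Finset.Ico 1 n).powersetCard k, (m : ℝ≥0∞)⁻¹ ^ k := by
        gcongr with S hS
        obtain ⟨hSsub, hScard⟩ := Finset.mem_powersetCard.1 hS
        rw [← hScard]
        exact hX.measure_forall_eq_le hm hn (fun j hj => (Finset.mem_Ico.1 (hSsub hj)).1)
          fun hnS => by simpa using (Finset.mem_Ico.1 (hSsub hnS)).2
    _ = (n - 1).choose k * (m : ℝ≥0∞)⁻¹ ^ k := by
        rw [Finset.sum_const, Finset.card_powersetCard, Nat.card_Ico, nsmul_eq_mul]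

theorem measure_injective_block_le (N L : ℕ) :
    P {ω | Function.Injective fun a : Fin N => block X L a ω} ≤
      (m ^ L).descFactorial N * (m : ℝ≥0∞)⁻¹ ^ (N * L) := by
  let V := Fintype.piFinset fun _ : Fin L => Finset.Icc 1 m
  have hsub : {ω | Function.Injective fun a : Fin N => block X L a ω} ≤ᵐ[P]
      ⋃ e : Fin N ↪ V, ⋂ i : Fin N × Fin L,
        X (finProdFinEquiv i + 1) ⁻¹' {(e i.1 : Fin L → ℕ) i.2} := by
    filter_upwards [hX.ae_mem_Icc] with ω hω hinj
    have hV : ∀ a : Fin N, block X L a ω ∈ V := fun a =>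
      Fintype.mem_piFinset.2 fun r => hω _ (by omega)
    exact Set.mem_iUnion.2 ⟨⟨fun a => ⟨block X L a ω, hV a⟩,
      fun a b hab => hinj (congrArg Subtype.val hab)⟩, Set.mem_iInter.2 fun i => by
        simp only [Set.mem_preimage, finProdFinEquiv_apply_val]; rfl⟩
  have hι : Function.Injective fun i : Fin N × Fin L => (finProdFinEquiv i : ℕ) + 1 :=
    (add_left_injective 1).comp (Fin.val_injective.comp finProdFinEquiv.injective)
  calc P {ω | Function.Injective fun a : Fin N => block X L a ω}
      ≤ ∑ e : Fin N ↪ V, P (⋂ i : Fin N × Fin L,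
          X (finProdFinEquiv i + 1) ⁻¹' {(e i.1 : Fin L → ℕ) i.2}) :=
        (measure_mono_ae hsub).trans (measure_iUnion_fintype_le _ _)
    _ ≤ ∑ _e : Fin N ↪ V, (m : ℝ≥0∞)⁻¹ ^ (N * L) := by
        gcongr with e
        simpa using hX.measure_iInter_preimage_le hι (fun _ => le_add_self) _
    _ = (m ^ L).descFactorial N * (m : ℝ≥0∞)⁻¹ ^ (N * L) := by
        simp [Fintype.card_embedding_eq, V, Fintype.card_piFinset]

theorem measure_lt_sup_repeatCount_le (hm : m ≠ 0) (N k : ℕ) :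
    P {ω | k < (Finset.Icc 1 (firstPairRepeat X ω)).sup fun n => repeatCount X n ω} ≤
      (m ^ 2).descFactorial N * (m : ℝ≥0∞)⁻¹ ^ (N * 2) +
        (2 * N : ℕ) * ((2 * N).choose (k + 1) * (m : ℝ≥0∞)⁻¹ ^ (k + 1)) := by
  calc P {ω | k < (Finset.Icc 1 (firstPairRepeat X ω)).sup fun n => repeatCount X n ω}
      ≤ P {ω | 2 * N < firstPairRepeat X ω} +
          ∑ n ∈ Finset.Icc 1 (2 * N), P {ω | k < repeatCount X n ω} :=
        (measure_mono (setOf_lt_sup_subset _ _ k (2 * N))).trans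
          ((measure_union_le _ _).trans (add_le_add le_rfl (measure_biUnion_finset_le _ _)))
    _ ≤ (m ^ 2).descFactorial N * (m : ℝ≥0∞)⁻¹ ^ (N * 2) +
          ∑ _n ∈ Finset.Icc 1 (2 * N), (2 * N).choose (k + 1) * (m : ℝ≥0∞)⁻¹ ^ (k + 1) := by
        gcongr with n hn
        · exact (measure_mono fun ω => injective_block_two_of_lt_firstPairRepeat).trans
            (hX.measure_injective_block_le N 2)
        · obtain ⟨hn1, hnN⟩ := Finset.mem_Icc.1 hn
          refine (hX.measure_le_repeatCount_le hm hn1 (k + 1)).trans ?_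
          gcongr
          omega
    _ = _ := by rw [Finset.sum_const, Nat.card_Icc, Nat.add_sub_cancel, nsmul_eq_mul]

theorem measure_lt_sup_repeatCount_le_inv_add_inv (hm : 2 ≤ m) {g h : ℕ} (hg : 1 ≤ g)
    (hgm : g ≤ m) (hfact : (4 * g) ^ (2 * h + 2) * m ^ 2 ≤ (2 * h + 1)!) :
    P {ω | 2 * h < (Finset.Icc 1 (firstPairRepeat X ω)).sup fun n => repeatCount X n ω} ≤
      (g : ℝ≥0∞)⁻¹ + (m : ℝ≥0∞)⁻¹ := by
  refine (hX.measure_lt_sup_repeatCount_le (by omega) (2 * (m * g)) (2 * h)).trans ?_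
  gcongr
  · refine natCast_mul_inv_pow_le_inv ?_
    rw [mul_comm _ 2, pow_mul]
    exact descFactorial_two_mul_mul_le (Nat.mul_pos (by omega) hg)
      (by rw [sq]; gcongr) (by rw [sq]; nlinarith)
  · rw [← mul_assoc, ← Nat.cast_mul, show 2 * (2 * (m * g)) = 4 * g * m by ring]
    exact natCast_mul_inv_pow_le_inv (mul_choose_mul_le_pow hfact)

end IsIIDUniform

end RandomSequences

theorem four_mul_pow_mul_sq_le_factorial {w : ℝ} {g h m : ℕ} (hw : 1 ≤ w) (hm : (m : ℝ) = w ^ 16)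
    (hg : (g : ℝ) ≤ w) (hh : 64 * w ^ 7 ≤ h) : (4 * g) ^ (2 * h + 2) * m ^ 2 ≤ (2 * h + 1)! := by
  have hw7 : 1 ≤ w ^ 7 := one_le_pow₀ hw
  apply pow_mul_sq_le_factorial
  · exact_mod_cast (show (7 : ℝ) ≤ h by linarith)
  · have : ((4 * g : ℕ) : ℝ) ^ 2 ≤ h := by
      push_cast
      calc (4 * (g : ℝ)) ^ 2 ≤ 16 * w ^ 2 := by nlinarith [(Nat.cast_nonneg g : (0 : ℝ) ≤ g)]
        _ ≤ 64 * w ^ 7 := by nlinarith [pow_le_pow_right₀ hw (show 2 ≤ 7 by norm_num)]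
        _ ≤ h := hh
    exact_mod_cast this
  · have : ((4 * g : ℕ) : ℝ) ^ 16 * (m : ℝ) ^ 2 ≤ (h : ℝ) ^ 7 := by
      push_cast
      calc (4 * (g : ℝ)) ^ 16 * (m : ℝ) ^ 2 ≤ (4 * w) ^ 16 * (w ^ 16) ^ 2 := by
            rw [hm]; gcongr
        _ = 4 ^ 16 * w ^ 48 := by ring
        _ ≤ 4 ^ 21 * w ^ 49 := by gcongr <;> norm_num
        _ = (64 * w ^ 7) ^ 7 := by ring
        _ ≤ (h : ℝ) ^ 7 := by gcongr
    exact_mod_cast this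

theorem rpow_sixteenth_pow_sixteen {x : ℝ} (hx : 0 ≤ x) : (x ^ (16⁻¹ : ℝ)) ^ 16 = x := by
  simpa using Real.rpow_inv_natCast_pow hx (n := 16) (by norm_num)

theorem eventually_le_floor_mul_sqrt {ε : ℝ} (hε : 0 < ε) :
    ∀ᶠ m : ℕ in atTop,
      1 ≤ (m : ℝ) ^ (16⁻¹ : ℝ) ∧ 64 * ((m : ℝ) ^ (16⁻¹ : ℝ)) ^ 7 ≤ ⌊ε * √m / 2⌋₊ := by
  have hw : Tendsto (fun m : ℕ => (m : ℝ) ^ (16⁻¹ : ℝ)) atTop atTop :=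
    (tendsto_rpow_atTop (by norm_num)).comp tendsto_natCast_atTop_atTop
  filter_upwards [hw.eventually_ge_atTop (max 1 (130 / ε))] with m hm
  set w := (m : ℝ) ^ (16⁻¹ : ℝ)
  have hw1 : 1 ≤ w := le_of_max_le_left hm
  have hεw : 130 ≤ ε * w := by
    have := le_of_max_le_right hm
    rwa [div_le_iff₀ hε, mul_comm] at this
  have hsqrt : √(m : ℝ) = w ^ 8 := by
    rw [← rpow_sixteenth_pow_sixteen (Nat.cast_nonneg m), show w ^ 16 = (w ^ 8) ^ 2 by ring,
      Real.sqrt_sq (by positivity)]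
  refine ⟨hw1, ?_⟩
  -- `ε√m / 2 = εw · w⁷ / 2 ≥ 65 w⁷ ≥ 64 w⁷ + 1`, which survives the floor
  have hfloor := Nat.lt_floor_add_one (ε * √m / 2)
  have hw7 : 1 ≤ w ^ 7 := one_le_pow₀ hw1
  have : 130 * w ^ 7 ≤ ε * w * w ^ 7 := by gcongr
  rw [hsqrt, show ε * w ^ 8 / 2 = ε * w * w ^ 7 / 2 by ring] at hfloor ⊢
  linarith

theorem stmt_6_general
    {Ω : ℕ → Type*} [∀ m, MeasurableSpace (Ω m)]
    (P : ∀ m, Measure (Ω m))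
    (X : ∀ m, ℕ → Ω m → ℕ)
    (hmeas : ∀ m n, Measurable (X m n))
    (hunif : ∀ m, 2 ≤ m → ∀ n (j : ℕ),
      Measure.map (X m (n + 1)) (P m) {j}
        = if j ∈ Finset.Icc 1 m then ((m : ℝ≥0∞))⁻¹ else 0)
    (hindep : ∀ m, 2 ≤ m →
      iIndepFun (fun n => X m (n + 1)) (P m))
    (τ : ∀ m, Ω m → ℕ)
    (hτ : ∀ m (ω : Ω m), τ m ω
        = sInf {n | ∃ j, 2 ≤ j ∧ j < n ∧
            X m (n - 1) ω = X m (j - 1) ω ∧ X m n ω = X m j ω})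
    :
    ∀ ε : ℝ, 0 < ε →
      Tendsto
        (fun m => P m {ω | ε <
          (((Finset.Icc 1 (τ m ω)).sup fun n =>
              ((Finset.Ico 1 n).filter fun j => X m j ω = X m n ω).card : ℕ) : ℝ)
            / Real.sqrt m})
        atTop (nhds 0) := by
  intro ε hε
  have hlim : Tendsto (fun m : ℕ => (⌊(m : ℝ) ^ (16⁻¹ : ℝ)⌋₊ : ℝ≥0∞)⁻¹ + (m : ℝ≥0∞)⁻¹)
      atTop (𝓝 0) := by
    simpa using (ENNReal.tendsto_inv_nat_nhds_zero.comp (tendsto_nat_floor_atTop.comp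
      ((tendsto_rpow_atTop (by norm_num)).comp tendsto_natCast_atTop_atTop))).add
      ENNReal.tendsto_inv_nat_nhds_zero
  refine tendsto_of_tendsto_of_tendsto_of_le_of_le' tendsto_const_nhds hlim
    (Eventually.of_forall fun _ => zero_le) ?_
  filter_upwards [eventually_le_floor_mul_sqrt hε, eventually_ge_atTop 2] with m ⟨hw1, hh⟩ hm
  have hX : IsIIDUniform (P m) (X m) m := ⟨hmeas m, hunif m hm, hindep m hm⟩
  have hw16 := rpow_sixteenth_pow_sixteen (Nat.cast_nonneg (α := ℝ) m)
  have hgm : ⌊(m : ℝ) ^ (16⁻¹ : ℝ)⌋₊ ≤ m := by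
    refine Nat.floor_le_of_le ?_
    nth_rw 2 [← hw16]
    exact le_self_pow₀ hw1 (by norm_num)
  refine le_trans (measure_mono fun ω hω => ?_) (hX.measure_lt_sup_repeatCount_le_inv_add_inv hm
    (Nat.one_le_floor_iff _ |>.2 hw1) hgm (four_mul_pow_mul_sq_le_factorial hw1 hw16.symm
      (Nat.floor_le (by positivity)) hh))
  replace hω := (lt_div_iff₀ (show (0 : ℝ) < √m by positivity)).1 hω
  rw [hτ] at hω
  have h2h : 2 * (⌊ε * √m / 2⌋₊ : ℝ) ≤ ε * √m := by
    linarith [Nat.floor_le (show 0 ≤ ε * √m / 2 by positivity)]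
  exact_mod_cast h2h.trans_lt hω

/-- With `τ` the first time a pair `(X (n-1), X n)` repeats an
earlier pair and `Y n = #{j < n : X j = X n}`, the quantity
`m^{-1/2} · max {Y n : n ≤ τ}` tends to `0` in probability as `m → ∞`. -/
theorem stmt_6
    {Ω : ℕ → Type*} [∀ m, MeasurableSpace (Ω m)]
    (P : ∀ m, Measure (Ω m)) (hP : ∀ m, IsProbabilityMeasure (P m))
    (X : ∀ m, ℕ → Ω m → ℕ)
    (hmeas : ∀ m n, Measurable (X m n))
    (hunif : ∀ m, 2 ≤ m → ∀ n (j : ℕ),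
      Measure.map (X m (n + 1)) (P m) {j}
        = if j ∈ Finset.Icc 1 m then ((m : ℝ≥0∞))⁻¹ else 0)
    (hindep : ∀ m, 2 ≤ m →
      iIndepFun (fun n => X m (n + 1)) (P m))
    (τ : ∀ m, Ω m → ℕ)
    (hτ : ∀ m (ω : Ω m), τ m ω
        = sInf {n | ∃ j, 2 ≤ j ∧ j < n ∧
            X m (n - 1) ω = X m (j - 1) ω ∧ X m n ω = X m j ω})
    :
    ∀ ε : ℝ, 0 < ε →
      Tendsto
        (fun m => P m {ω | ε <
          (((Finset.Icc 1 (τ m ω)).sup fun n =>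
              ((Finset.Ico 1 n).filter fun j => X m j ω = X m n ω).card : ℕ) : ℝ)
            / Real.sqrt m})
        atTop (nhds 0) :=
  stmt_6_general P X hmeas hunif hindep τ hτ
end

section
/- Fix integers m ≥ 1 and k ≥ 2. Let f be chosen uniformly at random from all m^(m^k) functions from [m]^k to [m], let X_1, …, X_k be i.i.d. uniform on [m] independent of f, and define X_{n+k} := f(X_n, …, X_{n+k-1}) for n ≥ 1. Separately, let Y_1, Y_2, … be i.i.d. uniform on [m]. For a sequence Z define W_n(Z) := (Z_n, …, Z_{n+k-1}) and τ(Z) as the minimal integer such that W_{τ-k+1}(Z) = W_{μ-k+1}(Z) for some k ≤ μ < τ. Then the random vector (τ(X), X_1, …, X_{τ(X)}) has exactly the same distribution as (τ(Y), Y_1, …, Y_{τ(Y)}). -/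
/-!
Let `τ` be the first time a length-`k` window repeats. Before `τ` the windows
`W_1, …, W_{τ-k}` are pairwise distinct, so for a word `w` of length `n` that stops exactly at
`n`, the event `X_1 … X_n = w` asks the seeds to take `k` prescribed values and the uniform `f`
to take `n - k` prescribed values at `n - k` distinct points: its probability is
`m^{-k} · m^{-(n-k)} = m^{-n}`, exactly that of `Y_1 … Y_n = w`. The pair `(τ, X_1 … X_τ)` is a
function of the stopped word, and the stopped words are finitely many (`τ ≤ m^k + k` by
pigeonhole), so both laws are the same finite mixture `∑_w m^{-|w|} δ_w`.
-/

open MeasureTheory ProbabilityTheory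
open scoped ENNReal

lemma ENNReal.pow_sub_mul_inv_pow {M : ℝ≥0∞} (hM₀ : M ≠ 0) (hM : M ≠ ⊤) {l N : ℕ} (hl : l ≤ N) :
    M ^ (N - l) * (M ^ N)⁻¹ = (M ^ l)⁻¹ := by
  rw [← pow_sub_mul_pow M hl, ENNReal.mul_inv (by simp [hM₀]) (by simp [hM]), ← mul_assoc,
    ENNReal.mul_inv_cancel (by simp [hM₀]) (by simp [hM]), one_mul]

namespace WindowRepeat

open Set

variable {α : Type*} {k : ℕ}

def repeatTimes (k : ℕ) (z : ℕ → α) : Set ℕ :=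
  {n | ∃ j, k ≤ j ∧ j < n ∧ ∀ r < k, z (n - k + 1 + r) = z (j - k + 1 + r)}

/-- `window k z j` is the paper's `W_{j+1}(z)`. -/
def window (k : ℕ) (z : ℕ → α) (j : ℕ) : Fin k → α := fun r => z (j + 1 + r)

lemma lt_of_mem_repeatTimes {z : ℕ → α} {n : ℕ} (h : n ∈ repeatTimes k z) : k < n := by
  obtain ⟨j, hkj, hjn, -⟩ := h
  omega

lemma add_mem_repeatTimes {z : ℕ → α} {a b : ℕ} (hab : a < b)
    (h : window k z a = window k z b) : b + k ∈ repeatTimes k z := by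
  refine ⟨a + k, by omega, by omega, fun r hr => ?_⟩
  simpa [window, Nat.add_sub_cancel] using (congrFun h ⟨r, hr⟩).symm

lemma mem_repeatTimes_congr {z z' : ℕ → α} {n N : ℕ} (h : EqOn z z' (Icc 1 N)) (hn : n ≤ N) :
    n ∈ repeatTimes k z ↔ n ∈ repeatTimes k z' := by
  suffices ∀ {u v : ℕ → α}, EqOn u v (Icc 1 N) → n ∈ repeatTimes k u → n ∈ repeatTimes k v from
    ⟨this h, this h.symm⟩
  rintro u v huv ⟨j, hkj, hjn, hwin⟩
  refine ⟨j, hkj, hjn, fun r hr => ?_⟩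
  rw [← huv ⟨by omega, by omega⟩, ← huv ⟨by omega, by omega⟩]
  exact hwin r hr

lemma isLeast_repeatTimes_congr {z z' : ℕ → α} {n : ℕ} (h : EqOn z z' (Icc 1 n)) :
    IsLeast (repeatTimes k z) n ↔ IsLeast (repeatTimes k z') n := by
  suffices ∀ {u v : ℕ → α}, EqOn u v (Icc 1 n) →
      IsLeast (repeatTimes k u) n → IsLeast (repeatTimes k v) n from
    ⟨this h, this h.symm⟩
  intro u v huv ⟨hmem, hleast⟩
  refine ⟨(mem_repeatTimes_congr huv le_rfl).1 hmem, fun a ha => ?_⟩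
  by_contra! han
  exact han.not_ge (hleast ((mem_repeatTimes_congr huv han.le).2 ha))

lemma exists_mem_repeatTimes_le [Fintype α] (k : ℕ) (z : ℕ → α) :
    ∃ n ∈ repeatTimes k z, n ≤ Fintype.card α ^ k + k := by
  have hcard : Fintype.card (Fin k → α) < Fintype.card (Fin (Fintype.card α ^ k + 1)) := by
    simp
  obtain ⟨a, b, hab, hwin⟩ := Fintype.exists_ne_map_eq_of_card_lt
    (fun i : Fin (Fintype.card α ^ k + 1) => window k z i) hcard
  rcases lt_or_gt_of_ne (Fin.val_ne_of_ne hab) with hlt | hlt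
  · exact ⟨b + k, add_mem_repeatTimes hlt hwin, by omega⟩
  · exact ⟨a + k, add_mem_repeatTimes hlt hwin.symm, by omega⟩

lemma isLeast_sInf_repeatTimes [Finite α] (k : ℕ) (z : ℕ → α) :
    IsLeast (repeatTimes k z) (sInf (repeatTimes k z)) := by
  have := Fintype.ofFinite α
  obtain ⟨n, hn, -⟩ := exists_mem_repeatTimes_le k z
  exact ⟨Nat.sInf_mem ⟨n, hn⟩, fun _ => Nat.sInf_le⟩

lemma injOn_window_of_isLeast {z : ℕ → α} {n : ℕ} (h : IsLeast (repeatTimes k z) n) :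
    InjOn (window k z) (Iio (n - k)) := by
  have hkn := lt_of_mem_repeatTimes h.1
  intro a ha b hb hab
  by_contra hne
  rcases lt_or_gt_of_ne hne with hlt | hlt
  · exact (h.2 (add_mem_repeatTimes hlt hab)).not_gt (by simp at hb; omega)
  · exact (h.2 (add_mem_repeatTimes hlt hab.symm)).not_gt (by simp at ha; omega)

lemma eqOn_Icc_iff_of_recursion {f : (Fin k → α) → α} {x : ℕ → α}
    (hx : ∀ j, x (j + 1 + k) = f (window k x j)) (w : ℕ → α) {n : ℕ} (hkn : k ≤ n) :
    EqOn x w (Icc 1 n) ↔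
      (fun i : Fin k => x (i + 1)) = (fun i : Fin k => w (i + 1)) ∧
        f ∘ (fun j : Fin (n - k) => window k w j) = fun j : Fin (n - k) => w (j + 1 + k) := by
  constructor
  · intro h
    refine ⟨funext fun i => h ⟨by omega, by omega⟩, funext fun j => ?_⟩
    have hwin : window k w j = window k x j :=
      funext fun r => (h ⟨by omega, by omega⟩).symm
    simp only [Function.comp_apply, hwin, ← hx]
    exact h ⟨by omega, by omega⟩
  · rintro ⟨hseed, htrans⟩ i
    induction i using Nat.strong_induction_on with
    | _ i ih =>
      rintro ⟨hi1, hin⟩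
      by_cases hik : i ≤ k
      · obtain ⟨i, rfl⟩ : ∃ i', i = i' + 1 := ⟨i - 1, by omega⟩
        exact congrFun hseed ⟨i, by omega⟩
      · obtain ⟨j, rfl⟩ : ∃ j, i = j + 1 + k := ⟨i - k - 1, by omega⟩
        have hwin : window k x j = window k w j :=
          funext fun r => ih _ (by omega) ⟨by omega, by omega⟩
        rw [hx, hwin]
        exact congrFun htrans ⟨j, by omega⟩

lemma card_comp_eq_of_injective {β γ : Type*} [Fintype β] [DecidableEq β] [Fintype γ]
    [DecidableEq γ] {l : ℕ} {a : Fin l → β} (ha : Function.Injective a) (t : Fin l → γ) :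
    Fintype.card {g : β → γ // g ∘ a = t} = Fintype.card γ ^ (Fintype.card β - l) := by
  classical
  let t' : range a → γ := t ∘ (Equiv.ofInjective a ha).symm
  have hiff : ∀ g : β → γ, g ∘ a = t ↔ g ∘ Subtype.val = t' := by
    intro g
    constructor
    · rintro rfl
      funext ⟨_, j, rfl⟩
      simp [t', Equiv.ofInjective_symm_apply]
    · intro hg
      funext j
      simpa [t', Equiv.ofInjective_symm_apply] using congrFun hg ⟨a j, j, rfl⟩
  rw [Fintype.card_congr ((Equiv.subtypeEquivRight hiff).trans (Equiv.subtypePreimage _ t')),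
    Fintype.card_fun, Fintype.card_subtype_compl]
  congr 2
  exact (Set.card_range_of_injective ha).trans (Fintype.card_fin l)

lemma map_eq_sum_smul_dirac {Ω γ ι : Type*} [MeasurableSpace Ω] [MeasurableSpace γ]
    (P : Measure Ω) {h : Ω → γ} (s : Finset ι) (E : ι → Set Ω) (c : ι → γ)
    (hE : ∀ q ∈ s, MeasurableSet (E q)) (hdisj : (s : Set ι).PairwiseDisjoint E)
    (hcover : ∀ ω, ∃ q ∈ s, ω ∈ E q) (hconst : ∀ q ∈ s, ∀ ω ∈ E q, h ω = c q) :
    P.map h = ∑ q ∈ s, P (E q) • Measure.dirac (c q) := by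
  classical
  have hpre : ∀ t : Set γ, h ⁻¹' t = ⋃ q ∈ s.filter (c · ∈ t), E q := by
    intro t
    ext ω
    simp only [mem_preimage, mem_iUnion, Finset.mem_filter, exists_prop]
    constructor
    · intro hω
      obtain ⟨q, hq, hωq⟩ := hcover ω
      exact ⟨q, ⟨hq, hconst q hq ω hωq ▸ hω⟩, hωq⟩
    · rintro ⟨q, ⟨hq, hc⟩, hωq⟩
      exact (hconst q hq ω hωq).symm ▸ hc
  have hEt : ∀ t : Set γ, ∀ q ∈ s.filter (c · ∈ t), MeasurableSet (E q) :=
    fun t q hq => hE q (Finset.mem_filter.1 hq).1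
  have hmeas : Measurable h := fun t _ => hpre t ▸ Finset.measurableSet_biUnion _ (hEt t)
  ext t ht
  rw [Measure.map_apply hmeas ht, hpre, measure_biUnion_finset
      (hdisj.subset (Finset.coe_subset.2 (Finset.filter_subset _ _))) (hEt t),
    Finset.sum_filter, Measure.coe_finsetSum, Finset.sum_apply]
  refine Finset.sum_congr rfl fun q _ => ?_
  by_cases hc : c q ∈ t <;> simp [hc, ht]

def prefixEvent {Ω : Type*} (Z : ℕ → Ω → α) (n : ℕ) (w : ℕ → α) : Set Ω :=
  {ω | EqOn (Z · ω) w (Icc 1 n)}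

lemma prefixEvent_eq_setOf_forall_range {Ω : Type*} (Z : ℕ → Ω → α) (n : ℕ) (w : ℕ → α) :
    prefixEvent Z n w = {ω | ∀ i ∈ Finset.range n, Z (i + 1) ω = w (i + 1)} := by
  ext ω
  simp only [prefixEvent, EqOn, mem_ofPred_eq, mem_Icc, Finset.mem_range]
  refine ⟨fun h i hi => h ⟨by omega, by omega⟩, fun h i hi => ?_⟩
  obtain ⟨i, rfl⟩ : ∃ i', i = i' + 1 := ⟨i - 1, by omega⟩
  exact h i (by omega)

lemma measurableSet_prefixEvent {Ω : Type*} [MeasurableSpace Ω] [MeasurableSpace α]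
    [MeasurableSingletonClass α] {Z : ℕ → Ω → α} (hZ : ∀ i, Measurable (Z i))
    (n : ℕ) (w : ℕ → α) : MeasurableSet (prefixEvent Z n w) := by
  have : prefixEvent Z n w = ⋂ i ∈ Icc 1 n, Z i ⁻¹' {w i} := by
    ext ω
    simp [prefixEvent, EqOn]
  exact this ▸ (finite_Icc 1 n).measurableSet_biInter fun i _ => hZ i (measurableSet_singleton _)

abbrev Word (α : Type*) := Σ n : ℕ, Fin n → α

namespace Word

def toSeq (d : α) (q : Word α) : ℕ → α :=
  fun i => if h : 1 ≤ i ∧ i ≤ q.1 then q.2 ⟨i - 1, by omega⟩ else d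

def ofSeq (n : ℕ) (z : ℕ → α) : Word α := ⟨n, fun i => z (i + 1)⟩

lemma toSeq_succ (d : α) (q : Word α) (i : Fin q.1) : q.toSeq d (i + 1) = q.2 i := by
  simp [toSeq, i.2]

lemma eqOn_toSeq_ofSeq (d : α) (n : ℕ) (z : ℕ → α) :
    EqOn ((ofSeq n z).toSeq d) z (Icc 1 n) := by
  rintro i ⟨hi1, hin⟩
  obtain ⟨i, rfl⟩ : ∃ i', i = i' + 1 := ⟨i - 1, by omega⟩
  exact toSeq_succ d (ofSeq n z) ⟨i, hin⟩

lemma eq_of_eqOn_toSeq (d : α) {q q' : Word α} (hlen : q.1 = q'.1)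
    (h : EqOn (q.toSeq d) (q'.toSeq d) (Icc 1 q.1)) : q = q' := by
  obtain ⟨n, w⟩ := q
  obtain ⟨n', w'⟩ := q'
  obtain rfl : n = n' := hlen
  congr 1
  funext i
  exact (toSeq_succ d ⟨n, w⟩ i).symm.trans
    ((h ⟨by omega, i.2⟩).trans (toSeq_succ d ⟨n, w'⟩ i))

end Word

variable (k) in
noncomputable def stoppedWords [Fintype α] (d : α) : Finset (Word α) := by
  classical
  exact ((Finset.range (Fintype.card α ^ k + k + 1)).sigma fun _ => Finset.univ).filter
    fun q => IsLeast (repeatTimes k (q.toSeq d)) q.1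

lemma mem_stoppedWords [Fintype α] {d : α} {q : Word α} :
    q ∈ stoppedWords k d ↔
      q.1 ≤ Fintype.card α ^ k + k ∧ IsLeast (repeatTimes k (q.toSeq d)) q.1 := by
  simp [stoppedWords]

lemma map_eq_sum_stoppedWords [Fintype α] [MeasurableSpace α] [MeasurableSingletonClass α]
    {Ω γ : Type*} [MeasurableSpace Ω] [MeasurableSpace γ] (P : Measure Ω)
    {Z : ℕ → Ω → α} (hZ : ∀ i, Measurable (Z i)) {τ : Ω → ℕ}
    (hτ : ∀ ω, τ ω = sInf (repeatTimes k (Z · ω))) (d : α) (e : ℕ → (ℕ → α) → γ)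
    (he : ∀ n z z', EqOn z z' (Icc 1 n) → e n z = e n z') :
    P.map (fun ω => e (τ ω) (Z · ω)) =
      ∑ q ∈ stoppedWords k d,
        P (prefixEvent Z q.1 (q.toSeq d)) • Measure.dirac (e q.1 (q.toSeq d)) := by
  have hτ_eq : ∀ q ∈ stoppedWords k d, ∀ ω ∈ prefixEvent Z q.1 (q.toSeq d), τ ω = q.1 := by
    intro q hq ω hω
    rw [hτ ω]
    exact ((isLeast_repeatTimes_congr hω).2 (mem_stoppedWords.1 hq).2).csInf_eq
  refine map_eq_sum_smul_dirac P _ _ _ (fun q _ => measurableSet_prefixEvent hZ _ _) ?_ ?_ ?_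
  · intro q hq q' hq' hne
    refine Set.disjoint_left.2 fun ω hω hω' => hne ?_
    have hlen : q.1 = q'.1 := (hτ_eq q hq ω hω).symm.trans (hτ_eq q' hq' ω hω')
    exact Word.eq_of_eqOn_toSeq d hlen fun i hi => (hω hi).symm.trans (hω' (hlen ▸ hi))
  · intro ω
    have hleast := isLeast_sInf_repeatTimes k (Z · ω)
    rw [← hτ ω] at hleast
    obtain ⟨n, hn, hle⟩ := exists_mem_repeatTimes_le k (Z · ω)
    refine ⟨Word.ofSeq (τ ω) (Z · ω), mem_stoppedWords.2 ⟨(hleast.2 hn).trans hle, ?_⟩, ?_⟩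
    · exact (isLeast_repeatTimes_congr (Word.eqOn_toSeq_ofSeq d _ _)).2 hleast
    · exact (Word.eqOn_toSeq_ofSeq d _ _).symm
  · intro q hq ω hω
    rw [hτ_eq q hq ω hω]
    exact he _ _ _ hω

lemma measure_forall_eq_of_iIndepFun {Ω ι : Type*} [MeasurableSpace Ω] [MeasurableSpace α]
    [MeasurableSingletonClass α] {P : Measure Ω} {Z : ι → Ω → α} (hZ : ∀ i, Measurable (Z i))
    {c : ℝ≥0∞} (hunif : ∀ i a, P.map (Z i) {a} = c) (hindep : iIndepFun Z P)
    (s : Finset ι) (w : ι → α) :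
    P {ω | ∀ i ∈ s, Z i ω = w i} = c ^ s.card := by
  have hset : {ω | ∀ i ∈ s, Z i ω = w i} = ⋂ i ∈ s, Z i ⁻¹' {w i} := by
    ext ω
    simp
  rw [hset, hindep.measure_inter_preimage_eq_mul s (fun _ _ => measurableSet_singleton _),
    Finset.prod_congr rfl fun i _ =>
      (Measure.map_apply (hZ i) (measurableSet_singleton _)).symm.trans (hunif i (w i)),
    Finset.prod_const]

lemma measure_prefixEvent_of_iIndepFun {Ω : Type*} [MeasurableSpace Ω] [MeasurableSpace α]
    [MeasurableSingletonClass α] {P : Measure Ω} {Z : ℕ → Ω → α} (hZ : ∀ i, Measurable (Z i))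
    {c : ℝ≥0∞} (hunif : ∀ i a, P.map (Z (i + 1)) {a} = c)
    (hindep : iIndepFun (fun i => Z (i + 1)) P) (n : ℕ) (w : ℕ → α) :
    P (prefixEvent Z n w) = c ^ n := by
  rw [prefixEvent_eq_setOf_forall_range,
    measure_forall_eq_of_iIndepFun (fun i => hZ (i + 1)) hunif hindep, Finset.card_range]

lemma measure_comp_eq_of_uniform {Ω β γ : Type*} [MeasurableSpace Ω] [Fintype β]
    [Fintype γ] [Nonempty γ] [MeasurableSpace γ] [MeasurableSingletonClass γ]
    {P : Measure Ω} {F : Ω → β → γ} (hF : Measurable F)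
    (hunif : ∀ g, P.map F {g} = ((Fintype.card γ : ℝ≥0∞) ^ Fintype.card β)⁻¹)
    {l : ℕ} {a : Fin l → β} (ha : Function.Injective a) (t : Fin l → γ) :
    P (F ⁻¹' {g | g ∘ a = t}) = ((Fintype.card γ : ℝ≥0∞) ^ l)⁻¹ := by
  classical
  have hl : l ≤ Fintype.card β := by simpa using Fintype.card_le_of_injective a ha
  rw [← Measure.map_apply hF (Set.toFinite _).measurableSet, ← Set.coe_toFinset {g | g ∘ a = t},
    ← sum_measure_singleton, Finset.sum_congr rfl fun g _ => hunif g, Finset.sum_const,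
    Set.toFinset_card, nsmul_eq_mul,
    show Fintype.card {g | g ∘ a = t} = _ from card_comp_eq_of_injective ha t, Nat.cast_pow,
    ENNReal.pow_sub_mul_inv_pow (by simp) (by simp) hl]

lemma measure_prefixEvent_of_recursion [Fintype α] [Nonempty α]
    [MeasurableSpace α] [MeasurableSingletonClass α] {Ω : Type*} [MeasurableSpace Ω]
    {P : Measure Ω} {F : Ω → (Fin k → α) → α} {X : ℕ → Ω → α}
    (hF : Measurable F) (hX : ∀ i, Measurable (X i))
    (hF_unif : ∀ g, P.map F {g} = ((Fintype.card α : ℝ≥0∞) ^ (Fintype.card α ^ k))⁻¹)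
    (hseed_unif : ∀ (i : Fin k) a, P.map (X (i + 1)) {a} = (Fintype.card α : ℝ≥0∞)⁻¹)
    (hseed_indep : iIndepFun (fun i : Fin k => X (i + 1)) P)
    (hseedF : IndepFun (fun ω (i : Fin k) => X (i + 1) ω) F P)
    (hrec : ∀ j ω, X (j + 1 + k) ω = F ω (window k (X · ω) j))
    {d : α} {q : Word α} (hq : q ∈ stoppedWords k d) :
    P (prefixEvent X q.1 (q.toSeq d)) = (Fintype.card α : ℝ≥0∞)⁻¹ ^ q.1 := by
  have hleast := (mem_stoppedWords.1 hq).2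
  set w := q.toSeq d
  have hkn : k < q.1 := lt_of_mem_repeatTimes hleast.1
  let a : Fin (q.1 - k) → Fin k → α := fun j => window k w j
  have ha : Function.Injective a := fun i j hij =>
    Fin.ext (injOn_window_of_isLeast hleast (by simp) (by simp) hij)
  have hsplit : prefixEvent X q.1 w =
      (fun ω (i : Fin k) => X (i + 1) ω) ⁻¹' {fun i : Fin k => w (i + 1)} ∩
        F ⁻¹' {g | g ∘ a = fun j : Fin (q.1 - k) => w (j + 1 + k)} := by
    ext ω
    exact eqOn_Icc_iff_of_recursion (f := F ω) (x := (X · ω)) (hrec · ω) w hkn.le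
  have hseed : P ((fun ω (i : Fin k) => X (i + 1) ω) ⁻¹' {fun i : Fin k => w (i + 1)}) =
      (Fintype.card α : ℝ≥0∞)⁻¹ ^ k := by
    have := measure_forall_eq_of_iIndepFun (fun _ => hX _) hseed_unif hseed_indep
      Finset.univ (fun i : Fin k => w (i + 1))
    rw [Finset.card_univ, Fintype.card_fin] at this
    rw [← this]
    congr 1
    ext ω
    simp [funext_iff]
  rw [hsplit, hseedF.measure_inter_preimage_eq_mul _ _ (measurableSet_singleton _)
      (Set.toFinite _).measurableSet, hseed,
    measure_comp_eq_of_uniform hF (by simpa using hF_unif) ha, ENNReal.inv_pow, ← pow_add,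
    Nat.add_sub_cancel' hkn.le]

end WindowRepeat

open WindowRepeat

theorem stmt_11_general
    (m k : ℕ) (hm : 1 ≤ m)
    {Ω₁ : Type*} [MeasurableSpace Ω₁] (P₁ : Measure Ω₁)
    {Ω₂ : Type*} [MeasurableSpace Ω₂] (P₂ : Measure Ω₂)
    (F : Ω₁ → (Fin k → Fin m) → Fin m)
    (X : ℕ → Ω₁ → Fin m) (Y : ℕ → Ω₂ → Fin m)
    (hFmeas : Measurable F)
    (hXmeas : ∀ n, Measurable (X n))
    (hYmeas : ∀ n, Measurable (Y n))
    -- `f` is uniform over all `m^(m^k)` functions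
    (hF : ∀ g : (Fin k → Fin m) → Fin m,
      Measure.map F P₁ {g} = ((m : ℝ≥0∞) ^ (m ^ k))⁻¹)
    -- the seeds `X 1, …, X k` are i.i.d. uniform on `[m]`
    (hseed_unif : ∀ i : Fin k, ∀ j : Fin m,
      Measure.map (X ((i : ℕ) + 1)) P₁ {j} = (m : ℝ≥0∞)⁻¹)
    (hseed_indep :
      iIndepFun (fun i : Fin k => X ((i : ℕ) + 1)) P₁)
    -- the seed vector is independent of `f`
    (hseedF : IndepFun (fun ω (i : Fin k) => X ((i : ℕ) + 1) ω) F P₁)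
    -- the recursion `X (n+k) = f (X n, …, X (n+k-1))` for `n ≥ 1`
    (hrec : ∀ n : ℕ, 1 ≤ n → ∀ ω,
      X (n + k) ω = F ω fun i : Fin k => X (n + (i : ℕ)) ω)
    -- `Y 1, Y 2, …` are i.i.d. uniform on `[m]`
    (hY_unif : ∀ n : ℕ, ∀ j : Fin m,
      Measure.map (Y (n + 1)) P₂ {j} = (m : ℝ≥0∞)⁻¹)
    (hY_indep : iIndepFun (fun n => Y (n + 1)) P₂)
    (τX : Ω₁ → ℕ) (τY : Ω₂ → ℕ)
    (hτX : ∀ ω, τX ω = sInf {n | ∃ j, k ≤ j ∧ j < n ∧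
        ∀ r < k, X (n - k + 1 + r) ω = X (j - k + 1 + r) ω})
    (hτY : ∀ ω, τY ω = sInf {n | ∃ j, k ≤ j ∧ j < n ∧
        ∀ r < k, Y (n - k + 1 + r) ω = Y (j - k + 1 + r) ω}) :
    Measure.map
        (fun ω => (τX ω,
          fun i : ℕ => if 1 ≤ i ∧ i ≤ τX ω then ((X i ω : ℕ) + 1) else 0)) P₁
      = Measure.map
        (fun ω => (τY ω,
          fun i : ℕ => if 1 ≤ i ∧ i ≤ τY ω then ((Y i ω : ℕ) + 1) else 0)) P₂ := by
  have : Nonempty (Fin m) := ⟨⟨0, hm⟩⟩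
  let e : ℕ → (ℕ → Fin m) → ℕ × (ℕ → ℕ) :=
    fun n z => (n, fun i => if 1 ≤ i ∧ i ≤ n then (z i : ℕ) + 1 else 0)
  have he : ∀ n z z', Set.EqOn z z' (Set.Icc 1 n) → e n z = e n z' := by
    intro n z z' h
    simp only [e, Prod.mk.injEq, true_and]
    funext i
    split_ifs with hi
    · rw [h hi]
    · rfl
  refine (map_eq_sum_stoppedWords P₁ hXmeas hτX ⟨0, hm⟩ e he).trans
    (Eq.trans ?_ (map_eq_sum_stoppedWords P₂ hYmeas hτY ⟨0, hm⟩ e he).symm)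
  refine Finset.sum_congr rfl fun q hq => ?_
  rw [measure_prefixEvent_of_recursion hFmeas hXmeas (by simpa using hF) (by simpa using hseed_unif)
      hseed_indep hseedF (fun j => hrec (j + 1) (by omega)) hq,
    measure_prefixEvent_of_iIndepFun hYmeas hY_unif hY_indep, Fintype.card_fin]

/-- Fix `m ≥ 1` and `k ≥ 2`.  In the first model, a function
`f : [m]^k → [m]` is chosen uniformly at random (each of the `m^(m^k)`
functions has probability `m^{-m^k}`), the seeds `X 1, …, X k` are i.i.d.
uniform on `[m]` and independent of `f`, and the sequence is extended by
`X (n+k) = f (X n, …, X (n+k-1))` for `n ≥ 1`.  In the second model,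
`Y 1, Y 2, …` are i.i.d. uniform on `[m]`.  With `τ` the first time a
length-`k` window repeats an earlier one, the random vector
`(τ(X), X 1, …, X τ(X))` (encoded as `τ` together with the sequence truncated
to indices `1, …, τ`, reporting values in `{1,…,m}` and `0` outside the
range) has exactly the same distribution in both models.  Here `[m]` is
encoded as `Fin m`, with `j : Fin m` representing the value `j + 1`. -/
theorem stmt_11
    (m k : ℕ) (hm : 1 ≤ m) (hk : 2 ≤ k)
    {Ω₁ : Type*} [MeasurableSpace Ω₁] (P₁ : Measure Ω₁) [IsProbabilityMeasure P₁]
    {Ω₂ : Type*} [MeasurableSpace Ω₂] (P₂ : Measure Ω₂) [IsProbabilityMeasure P₂]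
    (F : Ω₁ → (Fin k → Fin m) → Fin m)
    (X : ℕ → Ω₁ → Fin m) (Y : ℕ → Ω₂ → Fin m)
    (hFmeas : Measurable F)
    (hXmeas : ∀ n, Measurable (X n))
    (hYmeas : ∀ n, Measurable (Y n))
    -- `f` is uniform over all `m^(m^k)` functions
    (hF : ∀ g : (Fin k → Fin m) → Fin m,
      Measure.map F P₁ {g} = ((m : ℝ≥0∞) ^ (m ^ k))⁻¹)
    -- the seeds `X 1, …, X k` are i.i.d. uniform on `[m]`
    (hseed_unif : ∀ i : Fin k, ∀ j : Fin m,
      Measure.map (X ((i : ℕ) + 1)) P₁ {j} = (m : ℝ≥0∞)⁻¹)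
    (hseed_indep :
      iIndepFun (fun i : Fin k => X ((i : ℕ) + 1)) P₁)
    -- the seed vector is independent of `f`
    (hseedF : IndepFun (fun ω (i : Fin k) => X ((i : ℕ) + 1) ω) F P₁)
    -- the recursion `X (n+k) = f (X n, …, X (n+k-1))` for `n ≥ 1`
    (hrec : ∀ n : ℕ, 1 ≤ n → ∀ ω,
      X (n + k) ω = F ω fun i : Fin k => X (n + (i : ℕ)) ω)
    -- `Y 1, Y 2, …` are i.i.d. uniform on `[m]`
    (hY_unif : ∀ n : ℕ, ∀ j : Fin m,
      Measure.map (Y (n + 1)) P₂ {j} = (m : ℝ≥0∞)⁻¹)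
    (hY_indep : iIndepFun (fun n => Y (n + 1)) P₂)
    (τX : Ω₁ → ℕ) (τY : Ω₂ → ℕ)
    (hτX : ∀ ω, τX ω = sInf {n | ∃ j, k ≤ j ∧ j < n ∧
        ∀ r < k, X (n - k + 1 + r) ω = X (j - k + 1 + r) ω})
    (hτY : ∀ ω, τY ω = sInf {n | ∃ j, k ≤ j ∧ j < n ∧
        ∀ r < k, Y (n - k + 1 + r) ω = Y (j - k + 1 + r) ω}) :
    Measure.map
        (fun ω => (τX ω,
          fun i : ℕ => if 1 ≤ i ∧ i ≤ τX ω then ((X i ω : ℕ) + 1) else 0)) P₁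
      = Measure.map
        (fun ω => (τY ω,
          fun i : ℕ => if 1 ≤ i ∧ i ≤ τY ω then ((Y i ω : ℕ) + 1) else 0)) P₂ :=
  stmt_11_general m k hm P₁ P₂ F X Y hFmeas hXmeas hYmeas hF hseed_unif hseed_indep hseedF hrec
    hY_unif hY_indep τX τY hτX hτY
end

section
/- Let m ≥ 1 and k ≥ 2 be integers, let X_1, X_2, … be i.i.d. random variables uniform on [m] := {1,…,m}, and for j ∈ [m] let T_k(j) := #{1 ≤ i ≤ k : X_i = j}. Then E[ C(T_k(1), 2)² ] = C(k,2)/m² + 2(k−2)·C(k,2)/m³ + C(k,2)·C(k−2,2)/m⁴. -/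
/-!
`C(T, 2)` counts the 2-subsets `q` of the index set on which every `X_i` equals `1`, so
`C(T, 2)² = ∑_{q, q'} 1{X ≡ 1 on q ∪ q'}`, and by independence the expectation of each summand
is `m^{-|q ∪ q'|}`. For a fixed `q`, the pair `q'` meets `q` in two, one or no points for
`1`, `2(k-2)` and `C(k-2, 2)` choices of `q'`, giving `|q ∪ q'| = 2, 3, 4`.
-/

open MeasureTheory ProbabilityTheory Finset
open scoped ENNReal

namespace Finset

variable {ι : Type*}

theorem cast_choose_card_filter_eq_sum {R : Type*} [CommSemiring R] (S : Finset ι)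
    (p : ι → Prop) [DecidablePred p] (n : ℕ) :
    ((#(S.filter p)).choose n : R) = ∑ q ∈ S.powersetCard n, if ∀ i ∈ q, p i then 1 else 0 := by
  rw [sum_boole, ← card_powersetCard]
  congr 2
  ext q
  simp only [mem_powersetCard, mem_filter, subset_iff]
  grind

variable [DecidableEq ι]

theorem sq_cast_choose_card_filter_eq_sum {R : Type*} [CommSemiring R] (S : Finset ι)
    (p : ι → Prop) [DecidablePred p] (n : ℕ) :
    ((#(S.filter p)).choose n : R) ^ 2 = ∑ q ∈ S.powersetCard n, ∑ q' ∈ S.powersetCard n,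
      if ∀ i ∈ q ∪ q', p i then 1 else 0 := by
  rw [cast_choose_card_filter_eq_sum, sq, sum_mul_sum]
  refine sum_congr rfl fun q _ => sum_congr rfl fun q' _ => ?_
  simp only [forall_mem_union, ite_zero_mul_ite_zero, mul_one]

variable {S q : Finset ι}

theorem card_inter_mem_range_three (hq : q ∈ S.powersetCard 2) (q' : Finset ι) :
    #(q ∩ q') ∈ range 3 :=
  mem_range.2 (Nat.lt_succ_of_le ((card_le_card inter_subset_left).trans
    (mem_powersetCard.1 hq).2.le))

theorem filter_powersetCard_two_card_inter_eq_two (hq : q ∈ S.powersetCard 2) :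
    (S.powersetCard 2).filter (fun q' => #(q ∩ q') = 2) = {q} := by
  rw [mem_powersetCard] at hq
  ext q'
  simp only [mem_filter, mem_powersetCard, mem_singleton]
  constructor
  · rintro ⟨⟨-, hq'⟩, hinter⟩
    rw [← eq_of_subset_of_card_le (inter_subset_left : q ∩ q' ⊆ q) (by omega),
      eq_of_subset_of_card_le (inter_subset_right : q ∩ q' ⊆ q') (by omega)]
  · rintro rfl
    simpa using hq

theorem filter_powersetCard_two_card_inter_eq_zero :
    (S.powersetCard 2).filter (fun q' => #(q ∩ q') = 0) = (S \ q).powersetCard 2 := by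
  ext q'
  simp only [mem_filter, mem_powersetCard, card_eq_zero, subset_sdiff,
    ← disjoint_iff_inter_eq_empty, disjoint_comm (a := q)]
  tauto

/-- The fibres of `#(q ∩ ·)` partition the `C(#S, 2)` pairs, so the middle one is counted by
subtraction. -/
theorem card_filter_powersetCard_two_card_inter_eq_one (hq : q ∈ S.powersetCard 2) :
    #((S.powersetCard 2).filter (fun q' => #(q ∩ q') = 1)) = 2 * (#S - 2) := by
  have hfibers := card_eq_sum_card_fiberwise (t := range 3) (s := S.powersetCard 2)
    (f := fun q' => #(q ∩ q')) fun q' _ => card_inter_mem_range_three hq q'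
  rw [sum_range_succ, sum_range_succ, sum_range_one, filter_powersetCard_two_card_inter_eq_zero,
    filter_powersetCard_two_card_inter_eq_two hq, card_powersetCard, card_powersetCard,
    card_sdiff_of_subset (mem_powersetCard.1 hq).1, (mem_powersetCard.1 hq).2,
    card_singleton] at hfibers
  obtain ⟨n, hn⟩ : ∃ n, #S = n + 2 :=
    ⟨#S - 2, by have := card_le_card (mem_powersetCard.1 hq).1; grind⟩
  simp only [hn, Nat.add_sub_cancel, Nat.choose_succ_succ, Nat.choose_one_right,
    Nat.choose_zero_right, Nat.reduceSucc] at hfibers ⊢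
  omega

theorem sum_powersetCard_two_pow_card_union {R : Type*} [CommRing R]
    (hq : q ∈ S.powersetCard 2) (x : R) :
    ∑ q' ∈ S.powersetCard 2, x ^ #(q ∪ q')
      = x ^ 2 + 2 * ((#S : R) - 2) * x ^ 3 + ((#S - 2).choose 2 : ℕ) * x ^ 4 := by
  obtain ⟨hqS, hq2⟩ := mem_powersetCard.1 hq
  have hS : 2 ≤ #S := hq2 ▸ card_le_card hqS
  have hpow : ∀ q' ∈ S.powersetCard 2, x ^ #(q ∪ q') = x ^ (4 - #(q ∩ q')) := by
    intro q' hq'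
    have := card_union_add_card_inter q q'
    rw [(mem_powersetCard.1 hq').2] at this
    congr 1
    omega
  rw [sum_congr rfl hpow,
    ← sum_fiberwise_of_maps_to' (fun q' _ => card_inter_mem_range_three hq q')
      (fun j => x ^ (4 - j))]
  simp only [sum_const, nsmul_eq_mul, sum_range_succ,
    filter_powersetCard_two_card_inter_eq_zero, filter_powersetCard_two_card_inter_eq_two hq,
    card_filter_powersetCard_two_card_inter_eq_one hq, card_powersetCard,
    card_sdiff_of_subset hqS, hq2, card_singleton]
  push_cast [Nat.cast_sub hS]
  ring

end Finset

section Probability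

variable {Ω ι α : Type*} [DecidableEq α] {Y : ι → Ω → α} {a : α}

theorem ite_forall_eq_eq_indicator (A : Finset ι) :
    (fun ω => if ∀ i ∈ A, Y i ω = a then (1 : ℝ) else 0)
      = (⋂ i ∈ A, Y i ⁻¹' {a}).indicator 1 := by
  ext ω
  by_cases h : ∀ i ∈ A, Y i ω = a
  · rw [if_pos h, Set.indicator_of_mem (by simpa using h), Pi.one_apply]
  · rw [if_neg h, Set.indicator_of_notMem (by simpa using h)]

variable [MeasurableSpace Ω] {P : Measure Ω} [MeasurableSpace α] [MeasurableSingletonClass α]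

theorem integral_ite_forall_eq_eq_pow (hY : ∀ i, Measurable (Y i)) (hindep : iIndepFun Y P)
    {p : ℝ} (hp : ∀ i, P.real (Y i ⁻¹' {a}) = p) (A : Finset ι) :
    ∫ ω, (if ∀ i ∈ A, Y i ω = a then (1 : ℝ) else 0) ∂P = p ^ #A := by
  rw [ite_forall_eq_eq_indicator,
    integral_indicator_one (A.measurableSet_biInter fun i _ => hY i (measurableSet_singleton a)),
    measureReal_def, hindep.meas_biInter fun i _ => ⟨{a}, measurableSet_singleton a, rfl⟩,
    ENNReal.toReal_prod]
  simp [← measureReal_def, hp]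

theorem integral_sq_choose_two_card_filter_eq [DecidableEq ι] [IsFiniteMeasure P]
    (hY : ∀ i, Measurable (Y i)) (hindep : iIndepFun Y P)
    {p : ℝ} (hp : ∀ i, P.real (Y i ⁻¹' {a}) = p) (S : Finset ι) :
    ∫ ω, ((#(S.filter fun i => Y i ω = a)).choose 2 : ℝ) ^ 2 ∂P
      = (#S).choose 2 * (p ^ 2 + 2 * ((#S : ℝ) - 2) * p ^ 3 + (#S - 2).choose 2 * p ^ 4) := by
  have hint (A : Finset ι) :
      Integrable (fun ω => if ∀ i ∈ A, Y i ω = a then (1 : ℝ) else 0) P := by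
    rw [ite_forall_eq_eq_indicator]
    exact (integrable_const 1).indicator
      (A.measurableSet_biInter fun i _ => hY i (measurableSet_singleton a))
  simp_rw [sq_cast_choose_card_filter_eq_sum]
  rw [integral_finsetSum _ fun q _ => integrable_finsetSum _ fun q' _ => hint _]
  simp_rw [integral_finsetSum _ fun q' _ => hint _, integral_ite_forall_eq_eq_pow hY hindep hp]
  rw [sum_congr rfl fun q hq => sum_powersetCard_two_pow_card_union hq p, sum_const,
    card_powersetCard, nsmul_eq_mul]

end Probability

theorem stmt_14_general
    (m k : ℕ) (hm : 1 ≤ m)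
    {Ω : Type*} [MeasurableSpace Ω] (P : Measure Ω) [IsProbabilityMeasure P]
    (X : ℕ → Ω → ℕ)
    (hmeas : ∀ n, Measurable (X (n + 1)))
    (hunif : ∀ n (j : ℕ),
      Measure.map (X (n + 1)) P {j}
        = if j ∈ Finset.Icc 1 m then ((m : ℝ≥0∞))⁻¹ else 0)
    (hindep : iIndepFun (fun n => X (n + 1)) P)
    :
    ∫ ω, ((((Finset.Icc 1 k).filter fun i => X i ω = 1).card.choose 2 : ℝ)) ^ 2 ∂P
      = (k.choose 2 : ℝ) / (m : ℝ) ^ 2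
        + 2 * ((k : ℝ) - 2) * (k.choose 2 : ℝ) / (m : ℝ) ^ 3
        + (k.choose 2 : ℝ) * ((k - 2).choose 2 : ℝ) / (m : ℝ) ^ 4 := by
  have hIcc : Finset.Icc 1 k = (range k).map (addRightEmbedding 1) := by
    rw [range_eq_Ico, map_add_right_Ico, zero_add, Ico_add_one_right_eq_Icc]
  have hp (n : ℕ) : P.real (X (n + 1) ⁻¹' {1}) = (m : ℝ)⁻¹ := by
    have h := hunif n 1
    rw [Measure.map_apply (hmeas n) (measurableSet_singleton 1),
      if_pos (by simp [hm])] at h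
    simp [measureReal_def, h]
  simp_rw [hIcc, filter_map, card_map, Function.comp_def, addRightEmbedding_apply]
  rw [integral_sq_choose_two_card_filter_eq hmeas hindep hp, card_range]
  ring

/-- For i.i.d. uniforms on `[m]` (`m ≥ 1`, `k ≥ 2`), with
`T_k(j) = #{1 ≤ i ≤ k : X i = j}`, one has
`E[C(T_k(1),2)²] = C(k,2)/m² + 2(k-2)·C(k,2)/m³ + C(k,2)·C(k-2,2)/m⁴`. -/
theorem stmt_14
    (m k : ℕ) (hm : 1 ≤ m) (hk : 2 ≤ k)
    {Ω : Type*} [MeasurableSpace Ω] (P : Measure Ω) [IsProbabilityMeasure P]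
    (X : ℕ → Ω → ℕ)
    (hmeas : ∀ n, Measurable (X (n + 1)))
    (hunif : ∀ n (j : ℕ),
      Measure.map (X (n + 1)) P {j}
        = if j ∈ Finset.Icc 1 m then ((m : ℝ≥0∞))⁻¹ else 0)
    (hindep : iIndepFun (fun n => X (n + 1)) P)
    :
    ∫ ω, ((((Finset.Icc 1 k).filter fun i => X i ω = 1).card.choose 2 : ℝ)) ^ 2 ∂P
      = (k.choose 2 : ℝ) / (m : ℝ) ^ 2
        + 2 * ((k : ℝ) - 2) * (k.choose 2 : ℝ) / (m : ℝ) ^ 3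
        + (k.choose 2 : ℝ) * ((k - 2).choose 2 : ℝ) / (m : ℝ) ^ 4 :=
  stmt_14_general m k hm P X hmeas hunif hindep
end

section
/- Let m ≥ 2 and k ≥ 0 be integers, let X_1, X_2, … be i.i.d. random variables uniform on [m] := {1,…,m}, for j ∈ [m] let T_k(j) := #{1 ≤ i ≤ k : X_i = j}, and let H(k) := (1/m) Σ_{j=1}^m C(T_k(j), 2). Then Var(H(k)) = C(k,2)/m³ − C(k,2)/m⁴; equivalently, Var(H(k)) / (E[H(k)])² = (m−1)/C(k,2) whenever k ≥ 2. -/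
/-!
With `Y n := X (n + 1)`, `m · H(k)` is the number of pairs `{i, j} ⊆ [k]` with `Y i = Y j`.
Each such collision event has probability `1/m`, and two distinct ones are independent: the
second pair `{a, b}` contains an index `a` outside the first, and `Y a`, being independent of
everything indexed by the first pair and `b`, hits `Y b` with conditional probability `1/m`.
So the collision indicators are pairwise independent Bernoulli(`1/m`) variables, whence
`E[m H] = C(k,2)/m` and `Var(m H) = C(k,2) · (1/m) · (1 - 1/m)`.
-/

open MeasureTheory ProbabilityTheory Finset
open scoped ENNReal

namespace ProbabilityTheory

variable {Ω : Type*} {mΩ : MeasurableSpace Ω} {μ : Measure Ω} {s t : Set Ω}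

lemma IndepSet.indepFun_indicator_one (h : IndepSet s t μ) :
    IndepFun (s.indicator fun _ ↦ (1 : ℝ)) (t.indicator fun _ ↦ (1 : ℝ)) μ := by
  rw [IndepFun_iff_Indep]
  refine indep_of_indep_of_le ((IndepSet_iff_Indep s t μ).1 h) ?_ ?_ <;>
    exact (measurable_const.indicator
      (MeasurableSpace.measurableSet_generateFrom (Set.mem_singleton _))).comap_le

lemma variance_indicator_one [IsProbabilityMeasure μ] (hs : MeasurableSet s) :
    variance (s.indicator fun _ ↦ (1 : ℝ)) μ = μ.real s * (1 - μ.real s) := by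
  have hsq : (s.indicator fun _ ↦ (1 : ℝ)) ^ 2 = s.indicator fun _ ↦ 1 := by
    ext ω; by_cases hω : ω ∈ s <;> simp [hω]
  rw [variance_eq_sub (memLp_indicator_const 2 hs 1 (Or.inr (measure_ne_top μ s))), hsq,
    integral_indicator_const _ hs, smul_eq_mul, mul_one]
  ring

end ProbabilityTheory

lemma Finset.powersetCard_filter {ι : Type*} (n : ℕ) (S : Finset ι) (p : ι → Prop)
    [DecidablePred p] :
    (S.filter p).powersetCard n = (S.powersetCard n).filter fun e ↦ ∀ i ∈ e, p i := by
  ext e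
  simp only [mem_powersetCard, mem_filter, subset_iff]
  grind

lemma sum_choose_two_card_fiber_eq_card_collisions {ι α : Type*} [DecidableEq ι] [DecidableEq α]
    (f : ι → α) (S : Finset ι) (s : Finset α) :
    ∑ v ∈ s, (#{i ∈ S | f i = v}).choose 2
      = #{e ∈ S.powersetCard 2 | ∃ v ∈ s, ∀ i ∈ e, f i = v} := by
  simp_rw [← card_powersetCard, powersetCard_filter]
  rw [← card_biUnion]
  · congr 1; ext e; simp only [mem_biUnion, mem_filter]; grind
  · intro v _ w _ hvw
    refine disjoint_left.2 fun e hv hw ↦ hvw ?_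
    obtain ⟨i, hi⟩ := card_pos.1 ((mem_powersetCard.1 (mem_filter.1 hv).1).2 ▸ two_pos)
    exact ((mem_filter.1 hv).2 i hi).symm.trans ((mem_filter.1 hw).2 i hi)

lemma card_filter_Icc_one (k : ℕ) (p : ℕ → Prop) [DecidablePred p] :
    #{i ∈ Icc 1 k | p i} = #{n ∈ range k | p (n + 1)} := by
  refine card_nbij' (· - 1) (· + 1) ?_ ?_ ?_ ?_ <;> intro i <;>
    simp only [coe_filter, mem_Icc, mem_range] <;> grind

section Collision

variable {ι α Ω : Type*}

/-- Only coincidences at a value in `s` count, so that `numCollisions` agrees pointwise with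
`∑ v ∈ s, C(#{i ∈ S | Y i ω = v}, 2)` even where some `Y i` leaves `s`. -/
def collisionEvent (Y : ι → Ω → α) (s : Finset α) (e : Finset ι) : Set Ω :=
  {ω | ∃ v ∈ s, ∀ i ∈ e, Y i ω = v}

noncomputable def numCollisions (Y : ι → Ω → α) (s : Finset α) (S : Finset ι) : Ω → ℝ :=
  ∑ e ∈ S.powersetCard 2, (collisionEvent Y s e).indicator fun _ ↦ 1

lemma numCollisions_apply [DecidableEq ι] [DecidableEq α] (Y : ι → Ω → α) (s : Finset α)
    (S : Finset ι) (ω : Ω) :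
    numCollisions Y s S ω = ∑ v ∈ s, ((#{i ∈ S | Y i ω = v}).choose 2 : ℝ) := by
  rw [← Nat.cast_sum, sum_choose_two_card_fiber_eq_card_collisions, numCollisions,
    Finset.sum_apply, card_filter, Nat.cast_sum]
  refine sum_congr rfl fun e _ ↦ ?_
  by_cases h : ω ∈ collisionEvent Y s e <;> simp_all [collisionEvent]

lemma collisionEvent_eq_biUnion (Y : ι → Ω → α) (s : Finset α) (e : Finset ι) :
    collisionEvent Y s e = ⋃ v ∈ s, ⋂ i ∈ e, Y i ⁻¹' {v} := by
  ext ω; simp [collisionEvent]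

variable [mα : MeasurableSpace α] [MeasurableSingletonClass α]
  {mΩ : MeasurableSpace Ω} {P : Measure Ω}
  {Y : ι → Ω → α} {s : Finset α}

lemma measurableSet_collisionEvent_of_subset {T e : Finset ι} (he : e ⊆ T) :
    MeasurableSet[⨆ t ∈ T, mα.comap (Y t)] (collisionEvent Y s e) := by
  rw [collisionEvent_eq_biUnion]
  refine Finset.measurableSet_biUnion _ fun v _ ↦ Finset.measurableSet_biInter _ fun i hi ↦ ?_
  exact le_iSup₂ (f := fun t (_ : t ∈ T) ↦ mα.comap (Y t)) i (he hi) _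
    ⟨{v}, measurableSet_singleton v, rfl⟩

lemma measurableSet_collisionEvent (hY : ∀ i, Measurable (Y i)) (e : Finset ι) :
    MeasurableSet (collisionEvent Y s e) := by
  rw [collisionEvent_eq_biUnion]
  exact Finset.measurableSet_biUnion _ fun v _ ↦ Finset.measurableSet_biInter _ fun i _ ↦
    hY i (measurableSet_singleton v)

lemma measure_preimage_finset_eq_one {i : ι} (hY : Measurable (Y i))
    (hunif : ∀ v ∈ s, P (Y i ⁻¹' {v}) = (#s : ℝ≥0∞)⁻¹) (hs : s.Nonempty) :
    P (Y i ⁻¹' s) = 1 := by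
  rw [← sum_measure_preimage_singleton s fun v _ ↦ hY (measurableSet_singleton v),
    sum_congr rfl hunif, sum_const, nsmul_eq_mul,
    ENNReal.mul_inv_cancel (by simpa using hs.ne_empty) (by simp)]

section IIDUniform

variable [DecidableEq ι] [IsProbabilityMeasure P]
  (hY : ∀ i, Measurable (Y i)) (hind : iIndepFun Y P)
  (hunif : ∀ i, ∀ v ∈ s, P (Y i ⁻¹' {v}) = (#s : ℝ≥0∞)⁻¹) (hs : s.Nonempty)
include hY hind hunif hs

lemma measure_inter_collisionEvent_pair_of_notMem {T : Finset ι} {a b : ι} (ha : a ∉ T)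
    (hb : b ∈ T) {E : Set Ω} (hE : MeasurableSet[⨆ t ∈ T, mα.comap (Y t)] E) :
    P (E ∩ collisionEvent Y s {a, b}) = P E * (#s : ℝ≥0∞)⁻¹ := by
  have hle : ∀ t, mα.comap (Y t) ≤ mΩ := fun t ↦ (hY t).comap_le
  have hindep :
      Indep (⨆ t ∈ ({a} : Set ι), mα.comap (Y t)) (⨆ t ∈ (T : Set ι), mα.comap (Y t)) P :=
    indep_iSup_of_disjoint hle ((iIndepFun_iff_iIndep _ _ _).1 hind) (by simpa using ha)
  have hfiber : ∀ c ∈ s, MeasurableSet[⨆ t ∈ T, mα.comap (Y t)] (E ∩ Y b ⁻¹' {c}) := fun c _ ↦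
    hE.inter (le_iSup₂ (f := fun t (_ : t ∈ T) ↦ mα.comap (Y t)) b hb _
      ⟨{c}, measurableSet_singleton c, rfl⟩)
  have hslice : ∀ c ∈ s,
      P (Y a ⁻¹' {c} ∩ (E ∩ Y b ⁻¹' {c})) = (#s : ℝ≥0∞)⁻¹ * P (E ∩ Y b ⁻¹' {c}) := by
    intro c hc
    rw [← hunif a c hc]
    refine (Indep_iff _ _ _).1 hindep _ _ ?_ ?_
    · exact le_iSup₂ (f := fun t (_ : t ∈ ({a} : Set ι)) ↦ mα.comap (Y t)) a rfl _
        ⟨{c}, measurableSet_singleton c, rfl⟩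
    · simpa using hfiber c hc
  have hEm : MeasurableSet E := iSup₂_le (fun t _ ↦ hle t) _ hE
  calc P (E ∩ collisionEvent Y s {a, b})
      = P (⋃ c ∈ s, Y a ⁻¹' {c} ∩ (E ∩ Y b ⁻¹' {c})) := by
        congr 1; ext ω; simp [collisionEvent]; grind
    _ = ∑ c ∈ s, P (Y a ⁻¹' {c} ∩ (E ∩ Y b ⁻¹' {c})) := by
        refine measure_biUnion_finset (fun c _ d _ hcd ↦ ?_) fun c hc ↦
          (hY a (measurableSet_singleton c)).inter (iSup₂_le (fun t _ ↦ hle t) _ (hfiber c hc))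
        exact ((Set.disjoint_singleton.2 hcd).preimage _).mono Set.inter_subset_left
          Set.inter_subset_left
    _ = (#s : ℝ≥0∞)⁻¹ * P (⋃ c ∈ s, E ∩ Y b ⁻¹' {c}) := by
        rw [sum_congr rfl hslice, ← mul_sum, measure_biUnion_finset]
        · exact fun c _ d _ hcd ↦ ((Set.disjoint_singleton.2 hcd).preimage _).mono
            Set.inter_subset_right Set.inter_subset_right
        · exact fun c _ ↦ hEm.inter (hY b (measurableSet_singleton c))
    _ = P E * (#s : ℝ≥0∞)⁻¹ := by
        rw [← Set.inter_iUnion₂, Finset.set_biUnion_preimage_singleton, mul_comm,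
          measure_inter_conull ((prob_compl_eq_zero_iff ((hY b) s.measurableSet)).2
            (measure_preimage_finset_eq_one (hY b) (hunif b) hs))]

lemma measure_collisionEvent {e : Finset ι} (he : #e = 2) :
    P (collisionEvent Y s e) = (#s : ℝ≥0∞)⁻¹ := by
  obtain ⟨a, b, hab, rfl⟩ := card_eq_two.1 he
  simpa using measure_inter_collisionEvent_pair_of_notMem hY hind hunif hs
    (notMem_singleton.2 hab) (mem_singleton_self b) MeasurableSet.univ

lemma indepSet_collisionEvent {e e' : Finset ι} (he : #e = 2) (he' : #e' = 2) (hne : e ≠ e') :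
    IndepSet (collisionEvent Y s e) (collisionEvent Y s e') P := by
  rw [indepSet_iff_measure_inter_eq_mul (measurableSet_collisionEvent hY e)
    (measurableSet_collisionEvent hY e') P, measure_collisionEvent hY hind hunif hs he']
  obtain ⟨a, ha', ha⟩ : ∃ a ∈ e', a ∉ e :=
    not_subset.1 fun h ↦ hne (eq_of_subset_of_card_le h (by omega)).symm
  obtain ⟨b, hab, rfl⟩ : ∃ b, a ≠ b ∧ e' = {a, b} := by
    obtain ⟨x, y, hxy, rfl⟩ := card_eq_two.1 he'
    rcases mem_insert.1 ha' with rfl | hy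
    · exact ⟨y, hxy, rfl⟩
    · obtain rfl := mem_singleton.1 hy
      exact ⟨x, hxy.symm, pair_comm x a⟩
  exact measure_inter_collisionEvent_pair_of_notMem hY hind hunif hs (by simp [hab, ha])
    (mem_insert_self b e) (measurableSet_collisionEvent_of_subset (subset_insert b e))

lemma measureReal_collisionEvent {e : Finset ι} (he : #e = 2) :
    P.real (collisionEvent Y s e) = (#s : ℝ)⁻¹ := by
  simp [measureReal_def, measure_collisionEvent hY hind hunif hs he]

lemma integral_numCollisions (S : Finset ι) :
    ∫ ω, numCollisions Y s S ω ∂P = (#S).choose 2 * (#s : ℝ)⁻¹ := by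
  simp only [numCollisions, Finset.sum_apply]
  rw [integral_finsetSum _ fun e _ ↦ (integrable_const 1).indicator
    (measurableSet_collisionEvent hY e)]
  rw [sum_congr rfl fun e he ↦ by
    rw [integral_indicator_const _ (measurableSet_collisionEvent hY e),
      measureReal_collisionEvent hY hind hunif hs (mem_powersetCard.1 he).2, smul_eq_mul, mul_one]]
  simp

lemma variance_numCollisions (S : Finset ι) :
    variance (numCollisions Y s S) P = (#S).choose 2 * ((#s : ℝ)⁻¹ * (1 - (#s : ℝ)⁻¹)) := by
  rw [numCollisions, IndepFun.variance_sum]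
  · rw [sum_congr rfl fun e he ↦ by
      rw [variance_indicator_one (measurableSet_collisionEvent hY e),
        measureReal_collisionEvent hY hind hunif hs (mem_powersetCard.1 he).2]]
    simp
  · exact fun e _ ↦ memLp_indicator_const 2 (measurableSet_collisionEvent hY e) 1
      (Or.inr (measure_ne_top P _))
  · intro e he e' he' hne
    exact (indepSet_collisionEvent hY hind hunif hs (mem_powersetCard.1 he).2
      (mem_powersetCard.1 he').2 hne).indepFun_indicator_one

end IIDUniform

end Collision

/-- For i.i.d. uniforms on `[m]` (`m ≥ 2`, `k ≥ 0`), with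
`T_k(j) = #{1 ≤ i ≤ k : X i = j}` and
`H(k) = (1/m) ∑_{j=1}^m C(T_k(j), 2)`, one has
`Var(H(k)) = C(k,2)/m³ - C(k,2)/m⁴`; equivalently, for `k ≥ 2`,
`Var(H(k)) / (E[H(k)])² = (m-1)/C(k,2)`. -/
theorem stmt_15
    (m k : ℕ) (hm : 2 ≤ m)
    {Ω : Type*} [MeasurableSpace Ω] (P : Measure Ω) [IsProbabilityMeasure P]
    (X : ℕ → Ω → ℕ)
    (hmeas : ∀ n, Measurable (X (n + 1)))
    (hunif : ∀ n (j : ℕ),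
      Measure.map (X (n + 1)) P {j}
        = if j ∈ Finset.Icc 1 m then ((m : ℝ≥0∞))⁻¹ else 0)
    (hindep : iIndepFun (fun n => X (n + 1)) P)
    :
    variance
        (fun ω => (m : ℝ)⁻¹ * ∑ j ∈ Finset.Icc 1 m,
          ((((Finset.Icc 1 k).filter fun i => X i ω = j).card.choose 2 : ℕ) : ℝ)) P
      = (k.choose 2 : ℝ) / (m : ℝ) ^ 3 - (k.choose 2 : ℝ) / (m : ℝ) ^ 4
    ∧ (2 ≤ k →
      variance
          (fun ω => (m : ℝ)⁻¹ * ∑ j ∈ Finset.Icc 1 m,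
            ((((Finset.Icc 1 k).filter fun i => X i ω = j).card.choose 2 : ℕ) : ℝ)) P
        / (∫ ω, ((m : ℝ)⁻¹ * ∑ j ∈ Finset.Icc 1 m,
            ((((Finset.Icc 1 k).filter fun i => X i ω = j).card.choose 2 : ℕ) : ℝ)) ∂P) ^ 2
      = ((m : ℝ) - 1) / (k.choose 2 : ℝ)) := by
  have hs : (Icc 1 m).Nonempty := nonempty_Icc.2 (by omega)
  have hcard : #(Icc 1 m) = m := by simp
  have hunif' : ∀ n, ∀ v ∈ Icc 1 m, P (X (n + 1) ⁻¹' {v}) = (#(Icc 1 m) : ℝ≥0∞)⁻¹ :=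
    fun n v hv ↦ by
      rw [← Measure.map_apply (hmeas n) (measurableSet_singleton v), hunif, if_pos hv, hcard]
  simp_rw [card_filter_Icc_one, ← numCollisions_apply (fun n ↦ X (n + 1))]
  rw [variance_const_mul, integral_const_mul, variance_numCollisions hmeas hindep hunif' hs,
    integral_numCollisions hmeas hindep hunif' hs, hcard, card_range]
  have hm0 : (m : ℝ) ≠ 0 := by positivity
  refine ⟨by field_simp, fun hk ↦ ?_⟩
  have hk0 : (k.choose 2 : ℝ) ≠ 0 := by exact_mod_cast (Nat.choose_pos hk).ne'
  field_simp
end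

section
/- Let m ≥ 1 and k ≥ 1 be integers and let X_0, X_1, X_2, … be i.i.d. random variables uniform on [m] := {1,…,m}. Then for any indices 0 ≤ i < j (including overlapping windows, i.e., j − i < k), P( X_{i+r} = X_{j+r} for all 0 ≤ r < k ) = m^{−k}. -/
/-!
Induct on the window length `K`. The event that the first `K` pairs agree, and the value of
`X (i + K)`, are determined by `X 0, …, X (j + K - 1)`, because `i < j`; `X (j + K)` is independent
of these and uniform on `[m]`, and `X (i + K)` lies in `[m]` almost surely, so also requiring
`X (i + K) = X (j + K)` multiplies the probability by exactly `1 / m`, even when the windows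
overlap.
-/

open MeasureTheory ProbabilityTheory Filter
open scoped ENNReal NNReal

namespace ProbabilityTheory

variable {Ω α : Type*} {mΩ : MeasurableSpace Ω} {P : Measure Ω} [MeasurableSpace α]

theorem iIndepFun.indep_iSup_comap_lt {X : ℕ → Ω → α} (hX : iIndepFun X P)
    (hmeas : ∀ n, Measurable (X n)) (n : ℕ) :
    Indep (⨆ l < n, MeasurableSpace.comap (X l) ‹_›) (MeasurableSpace.comap (X n) ‹_›) P := by
  simpa using indep_iSup_of_disjoint (fun l => (hmeas l).comap_le)
    ((iIndepFun_iff_iIndep _ _ _).1 hX) (S := Set.Iio n) (T := {n}) (by simp)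

variable [MeasurableSingletonClass α] [Countable α]

theorem measure_inter_setOf_eq_of_indep {𝓕 : MeasurableSpace Ω} (h𝓕 : 𝓕 ≤ mΩ)
    {E : Set Ω} {W Y : Ω → α} {s : Set α} {c : ℝ≥0∞}
    (hE : MeasurableSet[𝓕] E) (hW : Measurable[𝓕] W) (hY : Measurable[mΩ] Y)
    (hind : Indep 𝓕 (MeasurableSpace.comap Y ‹_›) P)
    (hWs : ∀ᵐ ω ∂P, W ω ∈ s) (hYs : ∀ v ∈ s, P (Y ⁻¹' {v}) = c) :
    P (E ∩ {ω | W ω = Y ω}) = P E * c := by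
  have hEW : ∀ v, MeasurableSet[𝓕] (E ∩ W ⁻¹' {v}) :=
    fun v => hE.inter (hW (measurableSet_singleton v))
  have hsplit : E ∩ {ω | W ω = Y ω} = ⋃ v, (E ∩ W ⁻¹' {v}) ∩ Y ⁻¹' {v} := by
    ext ω; simp [eq_comm]
  have hterm : ∀ v, P ((E ∩ W ⁻¹' {v}) ∩ Y ⁻¹' {v}) = P (E ∩ W ⁻¹' {v}) * c := by
    intro v
    rw [(Indep_iff _ _ _).1 hind _ _ (hEW v) ⟨{v}, measurableSet_singleton v, rfl⟩]
    by_cases hv : v ∈ s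
    · rw [hYs v hv]
    · have hnull : P (E ∩ W ⁻¹' {v}) = 0 :=
        measure_mono_null (fun ω hω => by simp_all) (ae_iff.1 hWs)
      simp [hnull]
  have hpart : ∑' v, P (E ∩ W ⁻¹' {v}) = P E := by
    rw [← measure_iUnion (fun a b hab => ?_) fun v => h𝓕 _ (hEW v)]
    · congr 1; ext ω; simp
    · exact Disjoint.mono Set.inter_subset_right Set.inter_subset_right
        ((Set.disjoint_singleton.2 hab).preimage W)
  rw [hsplit, measure_iUnion (fun a b hab => ?_) fun v => (h𝓕 _ (hEW v)).inter
    (hY (measurableSet_singleton v)), tsum_congr hterm, ENNReal.tsum_mul_right, hpart]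
  exact Disjoint.mono Set.inter_subset_right Set.inter_subset_right
    ((Set.disjoint_singleton.2 hab).preimage Y)

theorem measure_setOf_forall_lt_eq_eq_pow [IsProbabilityMeasure P] {X : ℕ → Ω → α}
    (hX : iIndepFun X P) (hmeas : ∀ n, Measurable (X n)) {s : Set α} {c : ℝ≥0∞}
    (hXs : ∀ n, ∀ᵐ ω ∂P, X n ω ∈ s) (hc : ∀ n, ∀ v ∈ s, P (X n ⁻¹' {v}) = c)
    {i j : ℕ} (hij : i < j) (K : ℕ) :
    P {ω | ∀ r < K, X (i + r) ω = X (j + r) ω} = c ^ K := by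
  induction K with
  | zero => simp
  | succ K ih =>
    let 𝓕 := ⨆ l < j + K, MeasurableSpace.comap (X l) ‹_›
    have hX𝓕 : ∀ l < j + K, Measurable[𝓕] (X l) := fun l hl =>
      Measurable.of_comap_le (le_iSup₂ (f := fun l _ => MeasurableSpace.comap (X l) _) l hl)
    have hE : MeasurableSet[𝓕] {ω | ∀ r < K, X (i + r) ω = X (j + r) ω} := by
      simp only [Set.ofPred_forall]
      exact MeasurableSet.iInter fun r => MeasurableSet.iInter fun hr =>
        measurableSet_eq_fun (hX𝓕 _ (by omega)) (hX𝓕 _ (by omega))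
    have hstep : {ω | ∀ r < K + 1, X (i + r) ω = X (j + r) ω}
        = {ω | ∀ r < K, X (i + r) ω = X (j + r) ω} ∩ {ω | X (i + K) ω = X (j + K) ω} := by
      ext ω; simp only [Set.mem_ofPred_eq, Set.mem_inter_iff, Nat.forall_lt_succ_right]
    rw [hstep, measure_inter_setOf_eq_of_indep (iSup₂_le fun l _ => (hmeas l).comap_le) hE
      (hX𝓕 _ (by omega)) (hmeas _) (hX.indep_iSup_comap_lt hmeas _) (hXs _) (hc _), ih, pow_succ]

end ProbabilityTheory

theorem stmt_17_general
    (m k : ℕ)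
    {Ω : Type*} [MeasurableSpace Ω] (P : Measure Ω) [IsProbabilityMeasure P]
    (X : ℕ → Ω → ℕ)
    (hmeas : ∀ n, Measurable (X n))
    (hunif : ∀ n (j : ℕ),
      Measure.map (X n) P {j}
        = if j ∈ Finset.Icc 1 m then ((m : ℝ≥0∞))⁻¹ else 0)
    (hindep : iIndepFun X P) :
    ∀ i j : ℕ, i < j →
      P {ω | ∀ r < k, X (i + r) ω = X (j + r) ω} = ((m : ℝ≥0∞) ^ k)⁻¹ := by
  intro i j hij
  have hXs : ∀ n, ∀ᵐ ω ∂P, X n ω ∈ (Finset.Icc 1 m : Set ℕ) := fun n =>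
    ae_of_ae_map (hmeas n).aemeasurable <| ae_iff_of_countable.2 fun v hv =>
      not_not.1 fun h => hv ((hunif n v).trans (if_neg h))
  have hc : ∀ n, ∀ v ∈ (Finset.Icc 1 m : Set ℕ), P (X n ⁻¹' {v}) = (m : ℝ≥0∞)⁻¹ :=
    fun n v hv => (Measure.map_apply (hmeas n) (measurableSet_singleton v)).symm.trans
      ((hunif n v).trans (if_pos hv))
  rw [ENNReal.inv_pow]
  exact measure_setOf_forall_lt_eq_eq_pow hindep hmeas hXs hc hij k

/-- Let `m ≥ 1`, `k ≥ 1`, and let `X 0, X 1, X 2, …` be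
i.i.d. uniform on `[m] = {1,…,m}`.  Then for any indices `0 ≤ i < j`
(including overlapping windows, i.e. `j - i < k`),
`P(X (i+r) = X (j+r) for all 0 ≤ r < k) = m^{-k}`. -/
theorem stmt_17
    (m k : ℕ) (hm : 1 ≤ m) (hk : 1 ≤ k)
    {Ω : Type*} [MeasurableSpace Ω] (P : Measure Ω) [IsProbabilityMeasure P]
    (X : ℕ → Ω → ℕ)
    (hmeas : ∀ n, Measurable (X n))
    (hunif : ∀ n (j : ℕ),
      Measure.map (X n) P {j}
        = if j ∈ Finset.Icc 1 m then ((m : ℝ≥0∞))⁻¹ else 0)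
    (hindep : iIndepFun X P) :
    ∀ i j : ℕ, i < j →
      P {ω | ∀ r < k, X (i + r) ω = X (j + r) ω} = ((m : ℝ≥0∞) ^ k)⁻¹ :=
  stmt_17_general m k P X hmeas hunif hindep
end

section
/- Let m ≥ 1 and k ≥ 1 be integers and let X_0, X_1, X_2, … be i.i.d. random variables uniform on [m] := {1,…,m}; write W_n := (X_n, …, X_{n+k-1}) and G_{(i,j)} for the event {W_i = W_j}. Then for any two distinct pairs (i,j) ≠ (i',j') with i < j and i' < j', P( G_{(i,j)} ∩ G_{(i',j')} ) ≤ m^{−k−1}. -/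
open MeasureTheory ProbabilityTheory Filter
open scoped ENNReal NNReal

/-!
A constraint `X a = X b` with `a < b` holds with probability at most `m⁻¹` even conditionally on
all coordinates before `b`, by independence of `X b` from them. So a family of such constraints
whose larger indices `b` are pairwise distinct holds with probability at most `m⁻¹` per
constraint, peeling them off in decreasing order of `b`. The intersection of two window events
contains `k + 1` constraints of this kind: the `k` coincidences of the window pair with the larger
right index, plus the first coincidence `X i = X j` of the other pair (or `X i = X i'` when the
right indices agree).
-/

section

variable {Ω α : Type*} {mΩ : MeasurableSpace Ω} {P : Measure Ω}
  [MeasurableSpace α] [Countable α] [MeasurableSingletonClass α]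

theorem measure_inter_setOf_eq_le {m₁ : MeasurableSpace Ω} (hle : m₁ ≤ mΩ) {Z W : Ω → α}
    (hind : Indep m₁ (MeasurableSpace.comap Z inferInstance) P) (hW : Measurable[m₁] W)
    {E : Set Ω} (hE : MeasurableSet[m₁] E) {c : ℝ≥0∞} (hZ : ∀ v, P (Z ⁻¹' {v}) ≤ c) :
    P (E ∩ {ω | W ω = Z ω}) ≤ c * P E := by
  have hfiber : ∀ v, MeasurableSet[m₁] (E ∩ W ⁻¹' {v}) :=
    fun v => hE.inter (hW (measurableSet_singleton v))
  calc P (E ∩ {ω | W ω = Z ω}) ≤ P (⋃ v, (E ∩ W ⁻¹' {v}) ∩ Z ⁻¹' {v}) :=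
        measure_mono fun ω ⟨hω, hWZ⟩ => Set.mem_iUnion.2 ⟨W ω, ⟨hω, rfl⟩, hWZ.symm⟩
    _ ≤ ∑' v, P ((E ∩ W ⁻¹' {v}) ∩ Z ⁻¹' {v}) := measure_iUnion_le _
    _ = ∑' v, P (E ∩ W ⁻¹' {v}) * P (Z ⁻¹' {v}) := tsum_congr fun v =>
        (Indep_iff _ _ P).1 hind _ _ (hfiber v) ⟨{v}, measurableSet_singleton v, rfl⟩
    _ ≤ ∑' v, P (E ∩ W ⁻¹' {v}) * c := by gcongr with v; exact hZ v
    _ = c * P E := by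
        rw [ENNReal.tsum_mul_right, mul_comm, ← measure_iUnion _ fun v => hle _ (hfiber v),
          ← Set.inter_iUnion, ← Set.preimage_iUnion, Set.iUnion_of_singleton,
          Set.preimage_univ, Set.inter_univ]
        exact fun v w hvw => Set.disjoint_left.2 fun ω ⟨_, hv⟩ ⟨_, hw⟩ => hvw (hv.symm.trans hw)

theorem measure_forall_mem_eq_le {X : ℕ → Ω → α} (hX : ∀ n, Measurable (X n))
    (hindep : iIndepFun X P) {c : ℝ≥0∞} (hc : ∀ n v, P (X n ⁻¹' {v}) ≤ c)
    (a : ℕ → ℕ) (C : Finset ℕ) (ha : ∀ n ∈ C, a n < n) :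
    P {ω | ∀ n ∈ C, X (a n) ω = X n ω} ≤ c ^ C.card := by
  induction C using Finset.induction_on_max with
  | empty =>
    have := hindep.isProbabilityMeasure
    simp
  | insert N s hs ih =>
    set past : MeasurableSpace Ω := ⨆ i ∈ Set.Iio N, MeasurableSpace.comap (X i) inferInstance
    have hpast_le : past ≤ mΩ := iSup₂_le fun i _ => (hX i).comap_le
    have hX_past : ∀ i < N, Measurable[past] (X i) := fun i hi =>
      (comap_measurable (X i)).mono (le_iSup₂ (f := fun i (_ : i ∈ Set.Iio N) =>
        MeasurableSpace.comap (X i) inferInstance) i hi) le_rfl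
    have hind : Indep past (MeasurableSpace.comap (X N) inferInstance) P := by
      simpa [past] using indep_iSup_of_disjoint (fun i => (hX i).comap_le)
        ((iIndepFun_iff_iIndep _ _ _).1 hindep) (S := Set.Iio N) (T := {N}) (by simp)
    have hE : MeasurableSet[past] {ω | ∀ n ∈ s, X (a n) ω = X n ω} := by
      rw [show {ω | ∀ n ∈ s, X (a n) ω = X n ω} = ⋂ n ∈ s, {ω | X (a n) ω = X n ω} by ext; simp]
      exact Finset.measurableSet_biInter s fun n hn => measurableSet_eq_fun
        (hX_past _ ((ha n (Finset.mem_insert_of_mem hn)).trans (hs n hn))) (hX_past n (hs n hn))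
    rw [Finset.card_insert_of_notMem fun h => lt_irrefl N (hs N h), pow_succ']
    calc P {ω | ∀ n ∈ insert N s, X (a n) ω = X n ω}
        = P ({ω | ∀ n ∈ s, X (a n) ω = X n ω} ∩ {ω | X (a N) ω = X N ω}) := by
          congr 1; ext ω; simp [and_comm]
      _ ≤ c * P {ω | ∀ n ∈ s, X (a n) ω = X n ω} :=
          measure_inter_setOf_eq_le hpast_le hind
            (hX_past _ (ha N (Finset.mem_insert_self N s))) hE (hc N)
      _ ≤ c * c ^ s.card := by
          gcongr; exact ih fun n hn => ha n (Finset.mem_insert_of_mem hn)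

theorem measure_windowEq_and_eq_le {X : ℕ → Ω → α} (hX : ∀ n, Measurable (X n))
    (hindep : iIndepFun X P) {c : ℝ≥0∞} (hc : ∀ n v, P (X n ⁻¹' {v}) ≤ c)
    (k : ℕ) (i j u v : ℕ) (hij : i < j) (huv : u < v) (hvj : v < j) :
    P {ω | (∀ r < k, X (i + r) ω = X (j + r) ω) ∧ X u ω = X v ω} ≤ c ^ (k + 1) := by
  set C := insert v (Finset.Ico j (j + k))
  set a : ℕ → ℕ := fun n => if n < j then u else i + (n - j)
  have hcard : C.card = k + 1 := by
    rw [Finset.card_insert_of_notMem (by simp only [Finset.mem_Ico]; omega), Nat.card_Ico]; omega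
  have ha : ∀ n ∈ C, a n < n := by
    simp only [C, a, Finset.forall_mem_insert, Finset.mem_Ico, if_pos hvj]
    exact ⟨huv, fun n hn => by rw [if_neg (by omega)]; omega⟩
  calc P {ω | (∀ r < k, X (i + r) ω = X (j + r) ω) ∧ X u ω = X v ω}
      ≤ P {ω | ∀ n ∈ C, X (a n) ω = X n ω} := by
        refine measure_mono fun ω ⟨hwin, hω⟩ => ?_
        simp only [C, a, Finset.forall_mem_insert, Finset.mem_Ico, if_pos hvj]
        refine ⟨hω, fun n hn => ?_⟩
        obtain ⟨r, rfl⟩ := Nat.exists_eq_add_of_le hn.1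
        rw [if_neg (by omega), Nat.add_sub_cancel_left]
        exact hwin r (by omega)
    _ ≤ c ^ (k + 1) := hcard ▸ measure_forall_mem_eq_le hX hindep hc a C ha

end

theorem stmt_18_general
    (m k : ℕ) (hk : 1 ≤ k)
    {Ω : Type*} [MeasurableSpace Ω] (P : Measure Ω)
    (X : ℕ → Ω → ℕ)
    (hmeas : ∀ n, Measurable (X n))
    (hunif : ∀ n (j : ℕ),
      Measure.map (X n) P {j}
        = if j ∈ Finset.Icc 1 m then ((m : ℝ≥0∞))⁻¹ else 0)
    (hindep : iIndepFun X P) :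
    ∀ i j i' j' : ℕ, i < j → i' < j' → (i, j) ≠ (i', j') →
      P {ω | (∀ r < k, X (i + r) ω = X (j + r) ω) ∧
             (∀ r < k, X (i' + r) ω = X (j' + r) ω)}
        ≤ ((m : ℝ≥0∞) ^ (k + 1))⁻¹ := by
  intro i j i' j' hij hij' hne
  have hc : ∀ n v, P (X n ⁻¹' {v}) ≤ (m : ℝ≥0∞)⁻¹ := fun n v => by
    rw [← Measure.map_apply (hmeas n) (measurableSet_singleton v), hunif]
    split_ifs <;> simp
  have bound := measure_windowEq_and_eq_le hmeas hindep hc k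
  rw [ENNReal.inv_pow]
  rcases lt_trichotomy j j' with hjj' | rfl | hjj'
  · refine (measure_mono ?_).trans (bound i' j' i j hij' hij hjj')
    rintro ω ⟨hw, hw'⟩
    exact ⟨hw', by simpa using hw 0 hk⟩
  · have hii' : i ≠ i' := fun h => hne (by rw [h])
    rcases hii'.lt_or_gt with hii' | hii'
    · refine (measure_mono ?_).trans (bound i j i i' hij hii' hij')
      rintro ω ⟨hw, hw'⟩
      exact ⟨hw, by simpa using (hw 0 hk).trans (hw' 0 hk).symm⟩
    · refine (measure_mono ?_).trans (bound i j i' i hij hii' hij)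
      rintro ω ⟨hw, hw'⟩
      exact ⟨hw, by simpa using (hw' 0 hk).trans (hw 0 hk).symm⟩
  · refine (measure_mono ?_).trans (bound i j i' j' hij hij' hjj')
    rintro ω ⟨hw, hw'⟩
    exact ⟨hw, by simpa using hw' 0 hk⟩

/-- Let `m ≥ 1`, `k ≥ 1`, and let `X 0, X 1, X 2, …` be
i.i.d. uniform on `[m] = {1,…,m}`.  Write `G (i,j)` for the event that the
windows `W i = (X i, …, X (i+k-1))` and `W j` coincide.  Then for any two
distinct pairs `(i,j) ≠ (i',j')` with `i < j` and `i' < j'`,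
`P(G (i,j) ∩ G (i',j')) ≤ m^{-(k+1)}`. -/
theorem stmt_18
    (m k : ℕ) (hm : 1 ≤ m) (hk : 1 ≤ k)
    {Ω : Type*} [MeasurableSpace Ω] (P : Measure Ω) [IsProbabilityMeasure P]
    (X : ℕ → Ω → ℕ)
    (hmeas : ∀ n, Measurable (X n))
    (hunif : ∀ n (j : ℕ),
      Measure.map (X n) P {j}
        = if j ∈ Finset.Icc 1 m then ((m : ℝ≥0∞))⁻¹ else 0)
    (hindep : iIndepFun X P) :
    ∀ i j i' j' : ℕ, i < j → i' < j' → (i, j) ≠ (i', j') →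
      P {ω | (∀ r < k, X (i + r) ω = X (j + r) ω) ∧
             (∀ r < k, X (i' + r) ω = X (j' + r) ω)}
        ≤ ((m : ℝ≥0∞) ^ (k + 1))⁻¹ :=
  stmt_18_general m k hk P X hmeas hunif hindep
end
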